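/- arXiv:2308.07896 — 7 statements merged into one kernel-verified Lean document; each statement's English description precedes it below -/
import Mathlib

section
/- Fix D ∈ ℕ, D ≥ 1. Let I ⊆ ℝ be an interval, α, σ : I → ℝ continuously differentiable with α > 0 and σ > 0 on I, f(γ) := α'(γ)/α(γ), g²(γ) := (σ²)'(γ) − 2 f(γ) σ(γ)², NSR(γ) := σ(γ)/α(γ), and let ε_θ : ℝ^D × I → ℝ^D be continuous. If x : I → ℝ^D is differentiable and satisfies the diffusion ODE x'(γ) = f(γ) x(γ) + (g²(γ)/(2σ(γ))) ε_θ(x(γ), γ) for all γ ∈ I, then for all s, t ∈ I: x(t) = (α(t)/α(s)) x(s) + α(t) ∫_s^t NSR'(γ) ε_θ(x(γ), γ) dγ. -/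
/-- variation-of-constants solution of the diffusion ODE in terms of
the derivative of the noise-to-signal-ratio `NSR = σ/α`. -/
theorem stmt1
    (D : ℕ) (hD : 1 ≤ D)
    (I : Set ℝ) (hI : I.OrdConnected)
    (α σ α' σ' : ℝ → ℝ)
    (hα : ∀ γ ∈ I, HasDerivWithinAt α (α' γ) I γ)
    (hσ : ∀ γ ∈ I, HasDerivWithinAt σ (σ' γ) I γ)
    (hα'c : ContinuousOn α' I) (hσ'c : ContinuousOn σ' I)
    (hαpos : ∀ γ ∈ I, 0 < α γ) (hσpos : ∀ γ ∈ I, 0 < σ γ)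
    (f g2 NSR NSR' : ℝ → ℝ)
    (hf : ∀ γ, f γ = α' γ / α γ)
    (hg2 : ∀ γ, g2 γ = 2 * σ γ * σ' γ - 2 * f γ * σ γ ^ 2)
    (hNSR : ∀ γ, NSR γ = σ γ / α γ)
    (hNSR' : ∀ γ ∈ I, HasDerivWithinAt NSR (NSR' γ) I γ)
    (ε : EuclideanSpace ℝ (Fin D) → ℝ → EuclideanSpace ℝ (Fin D))
    (hε : ContinuousOn (fun p : EuclideanSpace ℝ (Fin D) × ℝ => ε p.1 p.2)
      (Set.univ ×ˢ I))
    (x : ℝ → EuclideanSpace ℝ (Fin D))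
    (hx : ∀ γ ∈ I,
      HasDerivWithinAt x (f γ • x γ + (g2 γ / (2 * σ γ)) • ε (x γ) γ) I γ) :
    ∀ s ∈ I, ∀ t ∈ I,
      x t = (α t / α s) • x s + α t • ∫ γ in s..t, NSR' γ • ε (x γ) γ := by
  intro s hs t ht
  have hIsub : Set.uIcc s t ⊆ I := by
    rcases le_total s t with h | h
    · rw [Set.uIcc_of_le h]; exact hI.out hs ht
    · rw [Set.uIcc_of_ge h]; exact hI.out ht hs
  set d : ℝ → ℝ := fun γ => (σ' γ * α γ - α' γ * σ γ) / (α γ) ^ 2 with hd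
  set e : ℝ → EuclideanSpace ℝ (Fin D) := fun γ => ε (x γ) γ with he
  set F : ℝ → EuclideanSpace ℝ (Fin D) := fun γ => (α γ)⁻¹ • x γ with hFdef
  have hxc : ContinuousOn x I := fun γ hγ => (hx γ hγ).continuousWithinAt
  have hαc : ContinuousOn α I := fun γ hγ => (hα γ hγ).continuousWithinAt
  have hσc : ContinuousOn σ I := fun γ hγ => (hσ γ hγ).continuousWithinAt
  have hα0 : ∀ γ ∈ I, α γ ≠ 0 := fun γ hγ => (hαpos γ hγ).ne'
  have hec : ContinuousOn e I := by
    have hmap : Set.MapsTo (fun γ => (x γ, γ)) I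
        (Set.univ ×ˢ I : Set (EuclideanSpace ℝ (Fin D) × ℝ)) := by
      intro γ hγ; exact ⟨Set.mem_univ _, hγ⟩
    exact hε.comp (hxc.prodMk continuousOn_id) hmap
  have hdc : ContinuousOn d I := by
    apply ContinuousOn.div
    · exact ((hσ'c.mul hαc).sub (hα'c.mul hσc))
    · exact hαc.pow 2
    · intro γ hγ; exact pow_ne_zero 2 (hα0 γ hγ)
  -- key derivative fact on the open interval
  have key : ∀ γ ∈ Set.Ioo (min s t) (max s t),
      HasDerivAt F (d γ • e γ) γ ∧ NSR' γ = d γ := by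
    intro γ hγ
    have hγu : γ ∈ Set.uIcc s t := Set.Ioo_subset_Icc_self hγ
    have hγI : γ ∈ I := hIsub hγu
    have hnhds : I ∈ nhds γ :=
      mem_nhds_iff.2 ⟨Set.Ioo (min s t) (max s t),
        fun z hz => hIsub (Set.Ioo_subset_Icc_self hz), isOpen_Ioo, hγ⟩
    have hαd : HasDerivAt α (α' γ) γ := (hα γ hγI).hasDerivAt hnhds
    have hσd : HasDerivAt σ (σ' γ) γ := (hσ γ hγI).hasDerivAt hnhds
    have hxd : HasDerivAt x (f γ • x γ + (g2 γ / (2 * σ γ)) • ε (x γ) γ) γ :=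
      (hx γ hγI).hasDerivAt hnhds
    have hα0' : α γ ≠ 0 := hα0 γ hγI
    have hσ0' : σ γ ≠ 0 := (hσpos γ hγI).ne'
    have hinv : HasDerivAt (fun z => (α z)⁻¹) (-(α' γ) / (α γ) ^ 2) γ :=
      hαd.inv hα0'
    have hFd : HasDerivAt F ((α γ)⁻¹ • (f γ • x γ + (g2 γ / (2 * σ γ)) • ε (x γ) γ) +
        (-(α' γ) / (α γ) ^ 2) • x γ) γ :=
      hinv.smul hxd
    have hveq : (α γ)⁻¹ • (f γ • x γ + (g2 γ / (2 * σ γ)) • ε (x γ) γ) +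
        (-(α' γ) / (α γ) ^ 2) • x γ
        = d γ • e γ := by
      have hs1 : (α γ)⁻¹ * f γ + -(α' γ) / (α γ) ^ 2 = 0 := by
        rw [hf]; field_simp; ring
      have hs2 : (α γ)⁻¹ * (g2 γ / (2 * σ γ)) = d γ := by
        rw [hg2, hf, hd]; field_simp
      rw [smul_add, smul_smul, smul_smul, add_right_comm, ← add_smul, hs1,
        zero_smul, zero_add, hs2]
    have hN : NSR' γ = d γ := by
      have hNd : HasDerivAt NSR ((σ' γ * α γ - σ γ * α' γ) / (α γ) ^ 2) γ := by
        have : HasDerivAt (fun z => σ z / α z)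
            ((σ' γ * α γ - σ γ * α' γ) / (α γ) ^ 2) γ := hσd.div hαd hα0'
        have hfun : NSR = fun z => σ z / α z := funext hNSR
        rw [hfun]; exact this
      have hN1 : HasDerivAt NSR (NSR' γ) γ := (hNSR' γ hγI).hasDerivAt hnhds
      rw [hN1.unique hNd, hd]; ring_nf
    exact ⟨hveq ▸ hFd, hN⟩
  have hcontF : ContinuousOn F (Set.uIcc s t) :=
    ((hαc.mono hIsub).inv₀ fun γ hγ => hα0 γ (hIsub hγ)).smul (hxc.mono hIsub)
  have hint : IntervalIntegrable (fun γ => d γ • e γ) MeasureTheory.volume s t :=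
    ((hdc.smul hec).mono hIsub).intervalIntegrable
  have hFTC : ∫ γ in s..t, d γ • e γ = F t - F s :=
    intervalIntegral.integral_eq_sub_of_hasDeriv_right hcontF
      (fun γ hγ => ((key γ hγ).1).hasDerivWithinAt) hint
  have hcongr : (∫ γ in s..t, NSR' γ • ε (x γ) γ) = ∫ γ in s..t, d γ • e γ := by
    apply intervalIntegral.integral_congr_ae
    have hae : ∀ᵐ γ ∂(MeasureTheory.volume : MeasureTheory.Measure ℝ),
        γ ≠ max s t := by
      rw [MeasureTheory.ae_iff]
      simp [MeasureTheory.measure_singleton]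
    filter_upwards [hae] with γ hne hmem
    have hγIoo : γ ∈ Set.Ioo (min s t) (max s t) := by
      rw [Set.uIoc] at hmem
      exact ⟨hmem.1, lt_of_le_of_ne hmem.2 hne⟩
    simp only [he]
    rw [(key γ hγIoo).2]
  have hFeq : F t = F s + ∫ γ in s..t, NSR' γ • ε (x γ) γ := by
    rw [hcongr, hFTC]; abel
  have hxt : x t = α t • F t := by
    rw [hFdef]; simp [smul_smul, mul_inv_cancel₀ (hα0 t ht)]
  rw [hxt, hFeq, smul_add, hFdef]
  congr 1
  rw [smul_smul, div_eq_mul_inv]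
end

section
/- (Proposition 3.1, score-based exact solution.) Fix D ∈ ℕ, D ≥ 1. Let I ⊆ ℝ be an interval, α, σ : I → ℝ continuously differentiable with α > 0 and σ > 0 on I, f(γ) := α'(γ)/α(γ), g²(γ) := (σ²)'(γ) − 2 f(γ) σ(γ)², NSR(γ) := σ(γ)/α(γ), and let ε_θ : ℝ^D × I → ℝ^D be continuous. Assume NSR is strictly monotone on I and let rNSR : NSR(I) → I be its inverse. If x : I → ℝ^D solves the diffusion ODE x'(γ) = f(γ) x(γ) + (g²(γ)/(2σ(γ))) ε_θ(x(γ), γ) on I, then for all s, t ∈ I: x(t)/α(t) − x(s)/α(s) = ∫_{NSR(s)}^{NSR(t)} ε_θ(x(rNSR(τ)), rNSR(τ)) dτ. -/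
/-- Proposition 3.1, score-based exact solution:
`x(t)/α(t) − x(s)/α(s) = ∫_{NSR(s)}^{NSR(t)} ε_θ(x(rNSR τ), rNSR τ) dτ`. -/
theorem stmt2
    (D : ℕ) (hD : 1 ≤ D)
    (I : Set ℝ) (hI : I.OrdConnected)
    (α σ α' σ' : ℝ → ℝ)
    (hα : ∀ γ ∈ I, HasDerivWithinAt α (α' γ) I γ)
    (hσ : ∀ γ ∈ I, HasDerivWithinAt σ (σ' γ) I γ)
    (hα'c : ContinuousOn α' I) (hσ'c : ContinuousOn σ' I)
    (hαpos : ∀ γ ∈ I, 0 < α γ) (hσpos : ∀ γ ∈ I, 0 < σ γ)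
    (f g2 NSR : ℝ → ℝ)
    (hf : ∀ γ, f γ = α' γ / α γ)
    (hg2 : ∀ γ, g2 γ = 2 * σ γ * σ' γ - 2 * f γ * σ γ ^ 2)
    (hNSR : ∀ γ, NSR γ = σ γ / α γ)
    (hmono : StrictMonoOn NSR I ∨ StrictAntiOn NSR I)
    (rNSR : ℝ → ℝ) (hrNSR : ∀ γ ∈ I, rNSR (NSR γ) = γ)
    (ε : EuclideanSpace ℝ (Fin D) → ℝ → EuclideanSpace ℝ (Fin D))
    (hε : ContinuousOn (fun p : EuclideanSpace ℝ (Fin D) × ℝ => ε p.1 p.2)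
      (Set.univ ×ˢ I))
    (x : ℝ → EuclideanSpace ℝ (Fin D))
    (hx : ∀ γ ∈ I,
      HasDerivWithinAt x (f γ • x γ + (g2 γ / (2 * σ γ)) • ε (x γ) γ) I γ) :
    ∀ s ∈ I, ∀ t ∈ I,
      (α t)⁻¹ • x t - (α s)⁻¹ • x s =
        ∫ τ in NSR s..NSR t, ε (x (rNSR τ)) (rNSR τ) := by
  intro s hs t ht
  -- abbreviations
  set NSR' : ℝ → ℝ := fun γ => (σ' γ * α γ - σ γ * α' γ) / (α γ) ^ 2 with hNSR'def
  have hαne : ∀ γ ∈ I, α γ ≠ 0 := fun γ hγ => (hαpos γ hγ).ne'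
  have hσne : ∀ γ ∈ I, σ γ ≠ 0 := fun γ hγ => (hσpos γ hγ).ne'
  -- derivative of NSR
  have hNSRfun : NSR = fun γ => σ γ / α γ := funext hNSR
  have hNSRderiv : ∀ γ ∈ I, HasDerivWithinAt NSR (NSR' γ) I γ := by
    intro γ hγ
    rw [hNSRfun]
    exact (hσ γ hγ).div (hα γ hγ) (hαne γ hγ)
  have hNSRcont : ContinuousOn NSR I := fun γ hγ =>
    (hNSRderiv γ hγ).continuousWithinAt
  have hαcont : ContinuousOn α I := fun γ hγ => (hα γ hγ).continuousWithinAt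
  have hσcont : ContinuousOn σ I := fun γ hγ => (hσ γ hγ).continuousWithinAt
  have hNSR'cont : ContinuousOn NSR' I := by
    apply ContinuousOn.div
    · exact (hσ'c.mul hαcont).sub (hσcont.mul hα'c)
    · exact hαcont.pow 2
    · intro γ hγ
      exact pow_ne_zero 2 (hαne γ hγ)
  -- continuity of x and of the composed noise term
  have hxcont : ContinuousOn x I := fun γ hγ => (hx γ hγ).continuousWithinAt
  have hεx : ContinuousOn (fun γ => ε (x γ) γ) I := by
    have : ContinuousOn (fun γ => ((x γ, γ) : EuclideanSpace ℝ (Fin D) × ℝ)) I :=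
      hxcont.prodMk continuousOn_id
    exact hε.comp this (fun γ hγ => ⟨Set.mem_univ _, hγ⟩)
  -- derivative of y = α⁻¹ • x
  set y : ℝ → EuclideanSpace ℝ (Fin D) := fun γ => (α γ)⁻¹ • x γ with hydef
  have hy : ∀ γ ∈ I, HasDerivWithinAt y (NSR' γ • ε (x γ) γ) I γ := by
    intro γ hγ
    have hc : HasDerivWithinAt (fun γ => (α γ)⁻¹) (-(α' γ) / (α γ) ^ 2) I γ :=
      (hα γ hγ).inv (hαne γ hγ)
    have := hc.smul (hx γ hγ)
    convert this using 1
    iterate 4 rfl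
    have hα0 := hαne γ hγ
    have hσ0 := hσne γ hγ
    rw [hf, hg2, hf]
    simp only [hNSR'def]
    match_scalars
    · field_simp
    · field_simp
      ring
  -- set-up for FTC and change of variables on [[s,t]]
  have hKI : Set.uIcc s t ⊆ I := hI.uIcc_subset hs ht
  have hIoo : Set.Ioo (min s t) (max s t) ⊆ Set.uIcc s t := Set.Ioo_subset_Icc_self
  have hnhds : ∀ γ ∈ Set.Ioo (min s t) (max s t), I ∈ nhds γ := by
    intro γ hγ
    exact Filter.mem_of_superset (isOpen_Ioo.mem_nhds hγ) (hIoo.trans hKI)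
  -- FTC: y t - y s = ∫ γ in s..t, NSR' γ • ε (x γ) γ
  have hint : IntervalIntegrable (fun γ => NSR' γ • ε (x γ) γ) MeasureTheory.volume s t := by
    apply ContinuousOn.intervalIntegrable
    exact ((hNSR'cont.mono hKI).smul (hεx.mono hKI))
  have hftc : (∫ γ in s..t, NSR' γ • ε (x γ) γ) = y t - y s := by
    apply intervalIntegral.integral_eq_sub_of_hasDeriv_right
    · intro γ hγ
      exact (hy γ (hKI hγ)).continuousWithinAt.mono hKI
    · intro γ hγ
      exact (((hy γ (hKI (hIoo hγ))).hasDerivAt (hnhds γ hγ))).hasDerivWithinAt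
    · exact hint
  -- injectivity of NSR on I
  have hinj : Set.InjOn NSR I := hmono.elim (fun h => h.injOn) (fun h => h.injOn)
  -- continuity of rNSR on NSR '' [[s, t]]
  set K := Set.uIcc s t with hKdef
  have hKcompact : IsCompact K := isCompact_uIcc
  haveI : CompactSpace K := isCompact_iff_compactSpace.mp hKcompact
  set φ : K → ℝ := K.restrict NSR with hφdef
  have hφc : Continuous φ := continuousOn_iff_continuous_restrict.mp (hNSRcont.mono hKI)
  have hφinj : Function.Injective φ := by
    rintro ⟨a, ha⟩ ⟨b, hb⟩ h
    exact Subtype.ext (hinj (hKI ha) (hKI hb) h)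
  have hemb := (hφc.isClosedEmbedding hφinj).toIsEmbedding
  have hrange : Set.range φ = NSR '' K := Set.range_restrict NSR K
  have hrNSRmaps : ∀ τ ∈ NSR '' K, rNSR τ ∈ K := by
    rintro τ ⟨γ, hγ, rfl⟩
    rwa [hrNSR γ (hKI hγ)]
  have hrNSRcont : ContinuousOn rNSR (NSR '' K) := by
    rw [continuousOn_iff_continuous_restrict]
    let e := hemb.toHomeomorph
    let e' : (NSR '' K) ≃ₜ K := (Homeomorph.setCongr hrange.symm).trans e.symm
    have heq : (NSR '' K).restrict rNSR = fun τ => ((e' τ : K) : ℝ) := by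
      funext τ
      obtain ⟨γ, hγ, hγτ⟩ := τ.2
      have h1 : rNSR (τ : ℝ) = γ := by rw [← hγτ, hrNSR γ (hKI hγ)]
      have h2 : e' τ = ⟨γ, hγ⟩ := by
        apply hφinj
        have : e (e.symm (Homeomorph.setCongr hrange.symm τ)) =
            Homeomorph.setCongr hrange.symm τ := e.apply_symm_apply _
        have h3 : φ ⟨γ, hγ⟩ = (τ : ℝ) := hγτ
        have : (e' τ : K) = e.symm (Homeomorph.setCongr hrange.symm τ) := rfl
        rw [this]
        apply_fun (Subtype.val : Set.range φ → ℝ) at *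
        · show φ (e.symm _) = φ _
          have h4 : ∀ k : K, (e k : ℝ) = φ k := fun k => rfl
          rw [← h4, e.apply_symm_apply, h3]
          rfl
      simp [h1, h2]
      exact h1
    change Continuous ((NSR '' K).restrict rNSR)
    rw [heq]
    exact continuous_subtype_val.comp e'.continuous
  -- continuity of the substituted integrand
  have hgcont : ContinuousOn (fun τ => ε (x (rNSR τ)) (rNSR τ)) (NSR '' K) := by
    have : ContinuousOn ((fun γ => ε (x γ) γ) ∘ rNSR) (NSR '' K) :=
      (hεx.mono hKI).comp hrNSRcont hrNSRmaps
    exact this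
  -- change of variables
  have hsub : (∫ γ in s..t, NSR' γ • ((fun τ => ε (x (rNSR τ)) (rNSR τ)) ∘ NSR) γ)
      = ∫ τ in NSR s..NSR t, ε (x (rNSR τ)) (rNSR τ) := by
    apply intervalIntegral.integral_comp_smul_deriv'' (hNSRcont.mono hKI)
    · intro γ hγ
      exact ((hNSRderiv γ (hKI (hIoo hγ))).hasDerivAt (hnhds γ hγ)).hasDerivWithinAt
    · exact hNSR'cont.mono hKI
    · exact hgcont
  have hcongr : (∫ γ in s..t, NSR' γ • ε (x γ) γ)
      = ∫ γ in s..t, NSR' γ • ((fun τ => ε (x (rNSR τ)) (rNSR τ)) ∘ NSR) γ := by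
    apply intervalIntegral.integral_congr
    intro γ hγ
    simp only [Function.comp_apply, hrNSR γ (hKI hγ)]
  calc (α t)⁻¹ • x t - (α s)⁻¹ • x s = y t - y s := rfl
    _ = ∫ γ in s..t, NSR' γ • ε (x γ) γ := hftc.symm
    _ = ∫ γ in s..t, NSR' γ • ((fun τ => ε (x (rNSR τ)) (rNSR τ)) ∘ NSR) γ := hcongr
    _ = ∫ τ in NSR s..NSR t, ε (x (rNSR τ)) (rNSR τ) := hsub
end

section
/- (Equivalence with the DPM-Solver exact-solution form.) Fix D ∈ ℕ, D ≥ 1. Let I ⊆ ℝ be an interval, α, σ : I → ℝ continuously differentiable with α > 0 and σ > 0 on I, f(γ) := α'(γ)/α(γ), g²(γ) := (σ²)'(γ) − 2 f(γ) σ(γ)², and λ(t) := log(α(t)/σ(t)). Assume λ is strictly monotone on I with inverse t(·) : λ(I) → I, and let ε_θ : ℝ^D × I → ℝ^D be continuous. If x : I → ℝ^D solves the diffusion ODE x'(γ) = f(γ) x(γ) + (g²(γ)/(2σ(γ))) ε_θ(x(γ), γ) on I, then for all s, t ∈ I: x(t) = (α(t)/α(s)) x(s) − α(t) ∫_{λ(s)}^{λ(t)}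 e^{−λ} ε_θ(x(t(λ)), t(λ)) dλ. -/
open Set

lemma inv_contOn {K : Set ℝ} (hK : IsCompact K) {lam tinv : ℝ → ℝ}
    (hc : ContinuousOn lam K) (hinj : Set.InjOn lam K)
    (hti : ∀ γ ∈ K, tinv (lam γ) = γ) : ContinuousOn tinv (lam '' K) := by
  haveI : CompactSpace K := isCompact_iff_compactSpace.mp hK
  set F : K → ℝ := K.restrict lam with hF
  have hFc : Continuous F := continuousOn_iff_continuous_restrict.mp hc
  have hFinj : Function.Injective F := fun a b h => Subtype.ext (hinj a.2 b.2 h)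
  have hemb := (hFc.isClosedEmbedding hFinj).isEmbedding
  let e : K ≃ₜ Set.range F := hemb.toHomeomorph
  have himg : lam '' K = Set.range F := Set.image_eq_range lam K
  rw [continuousOn_iff_continuous_restrict]
  have hrw : Set.domRestrict (lam '' K) tinv =
      (fun k : K => (k : ℝ)) ∘ e.symm ∘ (Homeomorph.setCongr himg) := by
    funext l
    set y := (Homeomorph.setCongr himg) l with hy
    have h1 : (e (e.symm y) : ℝ) = (y : ℝ) := by rw [e.apply_symm_apply]
    have h2 : (e (e.symm y) : ℝ) = F (e.symm y) := rfl
    have h3 : lam ((e.symm y : K) : ℝ) = (l : ℝ) := by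
      have : (y : ℝ) = (l : ℝ) := rfl
      rw [← this, ← h1, h2]; rfl
    simp only [Set.restrict_apply, Function.comp_apply]
    rw [← h3, hti _ (e.symm y).2]
  rw [hrw]
  exact continuous_subtype_val.comp (e.symm.continuous.comp (Homeomorph.setCongr himg).continuous)

lemma scal1 (a b c d : ℝ) (ha : a ≠ 0) (hb : b ≠ 0) :
    (c / a - d / b) * (b / a) = -((d - c / a * b) / a) := by
  field_simp; ring

lemma scal2 (a b c d : ℝ) (ha : a ≠ 0) (hb : b ≠ 0) :
    (c * b - a * d) / b ^ 2 / (a / b) = c / a - d / b := by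
  field_simp

/-- equivalence with the DPM-Solver exact-solution form: with
`λ(t) = log(α(t)/σ(t))` strictly monotone with inverse `tinv`, any solution of
the diffusion ODE satisfies
`x(t) = (α(t)/α(s)) x(s) − α(t) ∫_{λ(s)}^{λ(t)} e^{−λ} ε_θ(x(tinv λ), tinv λ) dλ`. -/
theorem stmt3
    (D : ℕ) (hD : 1 ≤ D)
    (I : Set ℝ) (hI : I.OrdConnected)
    (α σ α' σ' : ℝ → ℝ)
    (hα : ∀ γ ∈ I, HasDerivWithinAt α (α' γ) I γ)
    (hσ : ∀ γ ∈ I, HasDerivWithinAt σ (σ' γ) I γ)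
    (hα'c : ContinuousOn α' I) (hσ'c : ContinuousOn σ' I)
    (hαpos : ∀ γ ∈ I, 0 < α γ) (hσpos : ∀ γ ∈ I, 0 < σ γ)
    (f g2 lam : ℝ → ℝ)
    (hf : ∀ γ, f γ = α' γ / α γ)
    (hg2 : ∀ γ, g2 γ = 2 * σ γ * σ' γ - 2 * f γ * σ γ ^ 2)
    (hlam : ∀ γ, lam γ = Real.log (α γ / σ γ))
    (hmono : StrictMonoOn lam I ∨ StrictAntiOn lam I)
    (tinv : ℝ → ℝ) (htinv : ∀ γ ∈ I, tinv (lam γ) = γ)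
    (ε : EuclideanSpace ℝ (Fin D) → ℝ → EuclideanSpace ℝ (Fin D))
    (hε : ContinuousOn (fun p : EuclideanSpace ℝ (Fin D) × ℝ => ε p.1 p.2)
      (Set.univ ×ˢ I))
    (x : ℝ → EuclideanSpace ℝ (Fin D))
    (hx : ∀ γ ∈ I,
      HasDerivWithinAt x (f γ • x γ + (g2 γ / (2 * σ γ)) • ε (x γ) γ) I γ) :
    ∀ s ∈ I, ∀ t ∈ I,
      x t = (α t / α s) • x s -
        α t • ∫ l in lam s..lam t, Real.exp (-l) • ε (x (tinv l)) (tinv l) := by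
  intro s hs t ht
  -- basic continuity facts
  have hαc : ContinuousOn α I := fun γ hγ => (hα γ hγ).continuousWithinAt
  have hσc : ContinuousOn σ I := fun γ hγ => (hσ γ hγ).continuousWithinAt
  have hxc : ContinuousOn x I := fun γ hγ => (hx γ hγ).continuousWithinAt
  have hαne : ∀ γ ∈ I, α γ ≠ 0 := fun γ hγ => (hαpos γ hγ).ne'
  have hσne : ∀ γ ∈ I, σ γ ≠ 0 := fun γ hγ => (hσpos γ hγ).ne'
  set K := Set.uIcc s t with hKdef
  have hKI : K ⊆ I := hI.uIcc_subset hs ht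
  have hK : IsCompact K := isCompact_uIcc
  have hIooK : Set.Ioo (min s t) (max s t) ⊆ K := Set.Ioo_subset_Icc_self
  -- λ' = α'/α − σ'/σ
  set L : ℝ → ℝ := fun γ => α' γ / α γ - σ' γ / σ γ with hLdef
  have hlamfun : lam = fun γ => Real.log (α γ / σ γ) := funext hlam
  have hlamderiv : ∀ γ ∈ I, HasDerivWithinAt lam (L γ) I γ := by
    intro γ hγ
    have hd : HasDerivWithinAt (fun γ => α γ / σ γ)
        ((α' γ * σ γ - α γ * σ' γ) / σ γ ^ 2) I γ :=
      (hα γ hγ).div (hσ γ hγ) (hσne γ hγ)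
    have hne : α γ / σ γ ≠ 0 := div_ne_zero (hαne γ hγ) (hσne γ hγ)
    have := hd.log hne
    have h1 := hαne γ hγ
    have h2 := hσne γ hγ
    rw [hlamfun]
    convert this using 1
    exact (scal2 _ _ _ _ h1 h2).symm
  have hlamc : ContinuousOn lam I := fun γ hγ => (hlamderiv γ hγ).continuousWithinAt
  -- y = x/α and its derivative
  set y : ℝ → EuclideanSpace ℝ (Fin D) := fun γ => (α γ)⁻¹ • x γ with hydef
  set d : ℝ → EuclideanSpace ℝ (Fin D) :=
    fun γ => ((σ' γ - (α' γ / α γ) * σ γ) / α γ) • ε (x γ) γ with hddef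
  have hyderiv : ∀ γ ∈ I, HasDerivWithinAt y (d γ) I γ := by
    intro γ hγ
    have hinv : HasDerivWithinAt (fun γ => (α γ)⁻¹) (-α' γ / α γ ^ 2) I γ :=
      (hα γ hγ).inv (hαne γ hγ)
    have h := hinv.fun_smul (hx γ hγ)
    refine (h.congr_deriv ?_)
    symm
    simp only [hddef, hf, hg2]
    have hσγ := hσne γ hγ
    have hαγ := hαne γ hγ
    rw [smul_add, smul_smul, smul_smul, add_right_comm, ← add_smul]
    have hc : (α γ)⁻¹ * (α' γ / α γ) + -α' γ / α γ ^ 2 = 0 := by field_simp <;> ring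
    rw [hc, zero_smul, zero_add]
    congr 1
    field_simp <;> ring
  -- the integrand in λ
  set G : ℝ → EuclideanSpace ℝ (Fin D) :=
    fun l => Real.exp (-l) • ε (x (tinv l)) (tinv l) with hGdef
  -- continuity of ε along x
  have hεx : ContinuousOn (fun γ => ε (x γ) γ) I := by
    have hmap : Set.MapsTo (fun γ => (x γ, γ)) I (Set.univ ×ˢ I) :=
      fun γ hγ => ⟨trivial, hγ⟩
    exact hε.comp (hxc.prodMk continuousOn_id) hmap
  -- injectivity of lam on K
  have hinjK : Set.InjOn lam K := by
    rcases hmono with h | h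
    · exact (h.mono hKI).injOn
    · exact (h.mono hKI).injOn
  have htiK : ∀ γ ∈ K, tinv (lam γ) = γ := fun γ hγ => htinv γ (hKI hγ)
  -- continuity of G on lam '' K
  have htc : ContinuousOn tinv (lam '' K) := inv_contOn hK (hlamc.mono hKI) hinjK htiK
  have htmap : Set.MapsTo tinv (lam '' K) I := by
    rintro l ⟨γ, hγ, rfl⟩
    rw [htiK γ hγ]; exact hKI hγ
  have hGc : ContinuousOn G (lam '' K) := by
    have h1 : ContinuousOn (fun l => ε (x (tinv l)) (tinv l)) (lam '' K) :=
      hεx.comp htc htmap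
    exact ((Real.continuous_exp.comp continuous_neg).continuousOn).smul h1
  -- derivative upgrade inside Ioo
  have hnbh : ∀ γ ∈ Set.Ioo (min s t) (max s t), I ∈ nhds γ := fun γ hγ =>
    Filter.mem_of_superset (isOpen_Ioo.mem_nhds hγ) (hIooK.trans hKI)
  -- substitution
  have hLc : ContinuousOn L I := by
    exact (hα'c.div hαc hαne).sub (hσ'c.div hσc hσne)
  have hsub : (∫ γ in s..t, L γ • (G ∘ lam) γ) = ∫ l in lam s..lam t, G l := by
    refine intervalIntegral.integral_comp_smul_deriv'' (hlamc.mono hKI) ?_ (hLc.mono hKI) hGc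
    intro γ hγ
    exact ((hlamderiv γ (hKI (hIooK hγ))).hasDerivAt (hnbh γ hγ)).hasDerivWithinAt
  -- FTC for y
  have hyc : ContinuousOn y K := ((hαc.mono hKI).inv₀ (fun γ hγ => hαne γ (hKI hγ))).smul
    (hxc.mono hKI)
  have hdc : ContinuousOn d I := by
    refine ContinuousOn.fun_smul ?_ hεx
    exact ((hσ'c.sub ((hα'c.div hαc hαne).mul hσc)).div hαc hαne)
  have hdint : IntervalIntegrable d MeasureTheory.volume s t :=
    (hdc.mono hKI).intervalIntegrable
  have hftc : (∫ γ in s..t, d γ) = y t - y s := by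
    refine intervalIntegral.integral_eq_sub_of_hasDeriv_right hyc ?_ hdint
    intro γ hγ
    exact ((hyderiv γ (hKI (hIooK hγ))).hasDerivAt (hnbh γ hγ)).hasDerivWithinAt
  -- pointwise: L γ • G (lam γ) = - d γ on K
  have hpt : Set.EqOn (fun γ => L γ • (G ∘ lam) γ) (fun γ => -d γ) K := by
    intro γ hγ
    have hγI := hKI hγ
    have h1 : tinv (lam γ) = γ := htiK γ hγ
    have h2 : Real.exp (-lam γ) = σ γ / α γ := by
      have hp1 := hαpos γ hγI
      have hp2 := hσpos γ hγI
      rw [hlam γ, ← Real.log_inv, Real.exp_log]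
      · rw [inv_div]
      · positivity
    simp only [Function.comp_apply, hGdef, h1, h2, hddef]
    rw [smul_smul]
    rw [← neg_smul]
    congr 1
    exact scal1 _ _ _ _ (hαne γ hγI) (hσne γ hγI)
  -- put things together
  have hint : (∫ l in lam s..lam t, G l) = y s - y t := by
    rw [← hsub, intervalIntegral.integral_congr hpt]
    rw [intervalIntegral.integral_neg, hftc]
    abel
  have hxt : x t = α t • y t := by
    simp only [hydef, smul_smul]
    rw [mul_inv_cancel₀ (hαne t ht), one_smul]
  have : x t = α t • (y s - (y s - y t)) := by
    rw [sub_sub_cancel, ← hxt]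
  rw [hGdef] at hint
  rw [this, ← hint, smul_sub]
  congr 1
  simp only [hydef, smul_smul, div_eq_mul_inv]
end

section
/- (Corollary 1, recursive derivative estimation with limited differentiability.) Fix D ∈ ℕ, D ≥ 1, and m ∈ ℕ with m ≥ 3. Define φ₁(m) := Σ_{k=1}^{m} (−1)^{k−1}/k!, φ₂(m) := Σ_{k=2}^{m} (−1)^{k}/k!, φ₃(m) := Σ_{k=3}^{m} (−1)^{k+1}/k!. Let Γ : [a, b] → ℝ^D be m-times continuously differentiable on the compact interval [a, b] ⊆ ℝ. Then there exist C > 0 and δ > 0 such that for all τ_s, τ_t ∈ [a, b] with h_s := τ_t − τ_s satisfying 0 < |h_s| ≤ δ: ‖Γ'(τ_s) − [ (1/φ₁(m)) · (Γ(τ_t) − Γ(τ_s))/h_s − (φ₂(m)/φ₁(m)) Γ'(τ_t) − (φ₃(m) h_s/φ₁(m)) Γ''(τ_t) ]‖ ≤ C h_s². -/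
/-- `φ₁(m) = Σ_{k=1}^m (−1)^{k−1}/k!`. -/
noncomputable def phi1 (m : ℕ) : ℝ :=
  ∑ k ∈ Finset.Icc 1 m, (-1 : ℝ) ^ (k - 1) / Nat.factorial k

/-- `φ₂(m) = Σ_{k=2}^m (−1)^{k}/k!`. -/
noncomputable def phi2 (m : ℕ) : ℝ :=
  ∑ k ∈ Finset.Icc 2 m, (-1 : ℝ) ^ k / Nat.factorial k

/-- `φ₃(m) = Σ_{k=3}^m (−1)^{k+1}/k!`. -/
noncomputable def phi3 (m : ℕ) : ℝ :=
  ∑ k ∈ Finset.Icc 3 m, (-1 : ℝ) ^ (k + 1) / Nat.factorial k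

lemma two_pow_le_fact : ∀ k : ℕ, 4 ≤ k → 2^k ≤ Nat.factorial k := by
  intro k hk
  induction k with
  | zero => omega
  | succ n ih =>
    rcases Nat.lt_or_ge n 4 with h | h
    · interval_cases n <;> simp_all <;> decide
    · have hn := ih (by omega)
      rw [pow_succ, Nat.factorial_succ]
      calc 2^n * 2 ≤ Nat.factorial n * (n+1) := Nat.mul_le_mul hn (by omega)
        _ = (n+1) * Nat.factorial n := by ring

lemma neg_one_pow_sub_one {k : ℕ} (hk : 1 ≤ k) : (-1:ℝ)^(k-1) = -(-1:ℝ)^k := by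
  obtain ⟨j, rfl⟩ : ∃ j, k = j + 1 := ⟨k - 1, by omega⟩
  simp [pow_succ]

lemma phi1_four : phi1 4 = 5/8 := by
  unfold phi1
  rw [show Finset.Icc 1 4 = {1,2,3,4} from rfl]
  norm_num [Nat.factorial]

lemma phi1_ge (m : ℕ) (hm : 3 ≤ m) : (1:ℝ)/2 ≤ phi1 m := by
  rcases Nat.lt_or_ge m 4 with h | h
  · have : m = 3 := by omega
    subst this
    unfold phi1
    rw [show Finset.Icc 1 3 = {1,2,3} from rfl]
    norm_num [Nat.factorial]
  · have hsplit : phi1 m = phi1 4 + ∑ k ∈ Finset.Icc 5 m, (-1:ℝ)^(k-1)/Nat.factorial k := by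
      have he : Finset.Icc 1 m = Finset.Icc 1 4 ∪ Finset.Icc 5 m := by
        ext k; simp only [Finset.mem_Icc, Finset.mem_union]; omega
      have hd : Disjoint (Finset.Icc 1 4) (Finset.Icc 5 m) := by
        simp only [Finset.disjoint_left, Finset.mem_Icc]; omega
      unfold phi1; rw [he, Finset.sum_union hd]
    have habs : |∑ k ∈ Finset.Icc 5 m, (-1:ℝ)^(k-1)/Nat.factorial k| ≤ 1/16 := by
      calc |∑ k ∈ Finset.Icc 5 m, (-1:ℝ)^(k-1)/Nat.factorial k|
          ≤ ∑ k ∈ Finset.Icc 5 m, |(-1:ℝ)^(k-1)/Nat.factorial k| :=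
            Finset.abs_sum_le_sum_abs _ _
        _ ≤ ∑ k ∈ Finset.Icc 5 m, ((1:ℝ)/2)^k := by
            apply Finset.sum_le_sum
            intro k hk
            have hk5 : 5 ≤ k := (Finset.mem_Icc.mp hk).1
            have hfac : (2:ℝ)^k ≤ (Nat.factorial k : ℝ) := by
              exact_mod_cast two_pow_le_fact k (by omega)
            have h2 : (0:ℝ) < 2^k := by positivity
            rw [abs_div, abs_pow, abs_neg, abs_one, one_pow, Nat.abs_cast, div_pow,
              one_pow]
            exact one_div_le_one_div_of_le h2 hfac
        _ ≤ 1/16 := by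
            have hI : Finset.Icc 5 m = Finset.Ico 5 (m+1) := (Finset.Ico_add_one_right_eq_Icc 5 m).symm
            rw [hI, Finset.sum_Ico_eq_sub _ (by omega)]
            have h1 := sum_geometric_two_le (m+1)
            have h2 : ∑ k ∈ Finset.range 5, ((1:ℝ)/2)^k = 31/16 := by
              norm_num [Finset.sum_range_succ]
            rw [h2]; linarith
    rw [hsplit, phi1_four]
    have := abs_le.mp habs
    linarith [this.1]

lemma phi1_pos (m : ℕ) (hm : 3 ≤ m) : 0 < phi1 m := lt_of_lt_of_le (by norm_num) (phi1_ge m hm)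

lemma phi2_eq (m : ℕ) (hm : 3 ≤ m) : phi2 m = 1 - phi1 m := by
  have h1 : Finset.Icc 1 m = insert 1 (Finset.Icc 2 m) := by
    ext k; simp only [Finset.mem_Icc, Finset.mem_insert]; omega
  have h2 : (1:ℕ) ∉ Finset.Icc 2 m := by simp
  have : phi1 m + phi2 m = 1 := by
    unfold phi1 phi2
    rw [h1, Finset.sum_insert h2]
    have : ∑ k ∈ Finset.Icc 2 m, (-1:ℝ)^(k-1)/Nat.factorial k
        + ∑ k ∈ Finset.Icc 2 m, (-1:ℝ)^k/Nat.factorial k = 0 := by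
      rw [← Finset.sum_add_distrib]
      apply Finset.sum_eq_zero
      intro k hk
      rw [neg_one_pow_sub_one (by exact le_trans (by norm_num) (Finset.mem_Icc.mp hk).1)]
      ring
    norm_num [Nat.factorial]
    linarith
  linarith

lemma phi3_eq (m : ℕ) (hm : 3 ≤ m) : phi3 m = phi1 m - 1/2 := by
  have h1 : Finset.Icc 1 m = insert 1 (insert 2 (Finset.Icc 3 m)) := by
    ext k; simp only [Finset.mem_Icc, Finset.mem_insert]; omega
  have h2 : (1:ℕ) ∉ insert 2 (Finset.Icc 3 m) := by simp
  have h3 : (2:ℕ) ∉ Finset.Icc 3 m := by simp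
  have hsum : ∑ k ∈ Finset.Icc 3 m, (-1:ℝ)^(k-1)/Nat.factorial k = phi3 m := by
    unfold phi3
    apply Finset.sum_congr rfl
    intro k hk
    have hk3 : 3 ≤ k := (Finset.mem_Icc.mp hk).1
    have : k + 1 = (k - 1) + 2 := by omega
    rw [this, pow_add]
    norm_num
  have : phi1 m = 1 - 1/2 + phi3 m := by
    unfold phi1
    rw [h1, Finset.sum_insert h2, Finset.sum_insert h3, hsum]
    norm_num [Nat.factorial]
    ring
  linarith

set_option maxHeartbeats 1000000 in
/-- Corollary 1, recursive derivative estimation with limited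
differentiability: for `m ≥ 3` and `Γ : [a,b] → ℝ^D` m-times continuously
differentiable, `Γ'(τ_s) = (1/φ₁(m)) (Γ(τ_t) − Γ(τ_s))/h_s − (φ₂(m)/φ₁(m)) Γ'(τ_t)
  − (φ₃(m) h_s/φ₁(m)) Γ''(τ_t) + O(h_s²)`. -/
theorem stmt6
    (D : ℕ) (hD : 1 ≤ D) (m : ℕ) (hm : 3 ≤ m) (a b : ℝ) (hab : a ≤ b)
    (Γ : ℝ → EuclideanSpace ℝ (Fin D))
    (hΓ : ContDiffOn ℝ (m : ℕ∞) Γ (Set.Icc a b)) :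
    ∃ C > 0, ∃ δ > 0, ∀ τs ∈ Set.Icc a b, ∀ τt ∈ Set.Icc a b,
      0 < |τt - τs| → |τt - τs| ≤ δ →
      ‖iteratedDerivWithin 1 Γ (Set.Icc a b) τs -
          ((1 / (phi1 m) / (τt - τs)) • (Γ τt - Γ τs) -
            (phi2 m / phi1 m) • iteratedDerivWithin 1 Γ (Set.Icc a b) τt -
            (phi3 m * (τt - τs) / phi1 m) •
              iteratedDerivWithin 2 Γ (Set.Icc a b) τt)‖ ≤
        C * (τt - τs) ^ 2 := by
  rcases eq_or_lt_of_le hab with rfl | hlt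
  · refine ⟨1, one_pos, 1, one_pos, fun τs hs τt ht hpos _ => ?_⟩
    have h1 : τs = a := le_antisymm hs.2 hs.1
    have h2 : τt = a := le_antisymm ht.2 ht.1
    rw [h1, h2] at hpos; simp at hpos
  set I := Set.Icc a b with hI
  have hu : UniqueDiffOn ℝ I := uniqueDiffOn_Icc hlt
  set f1 := iteratedDerivWithin 1 Γ I with hf1
  set f2 := iteratedDerivWithin 2 Γ I with hf2
  set f3 := iteratedDerivWithin 3 Γ I with hf3
  have hm3 : ContDiffOn ℝ (3 : ℕ∞) Γ I := hΓ.of_le (by exact_mod_cast hm)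
  -- derivatives within I
  have hd0 : ∀ x ∈ I, HasDerivWithinAt Γ (f1 x) I x := by
    intro x hx
    have hdiff : DifferentiableOn ℝ Γ I :=
      hm3.differentiableOn (by norm_num)
    have := (hdiff x hx).hasDerivWithinAt
    rwa [hf1, iteratedDerivWithin_one]
  have hd1 : ∀ x ∈ I, HasDerivWithinAt f1 (f2 x) I x := by
    intro x hx
    have hdiff : DifferentiableOn ℝ f1 I :=
      hm3.differentiableOn_iteratedDerivWithin (by norm_num) hu
    have := (hdiff x hx).hasDerivWithinAt
    rwa [hf2, iteratedDerivWithin_succ]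
  have hd2 : ∀ x ∈ I, HasDerivWithinAt f2 (f3 x) I x := by
    intro x hx
    have hdiff : DifferentiableOn ℝ f2 I :=
      hm3.differentiableOn_iteratedDerivWithin (by norm_num) hu
    have := (hdiff x hx).hasDerivWithinAt
    rwa [hf3, iteratedDerivWithin_succ]
  -- bound on third derivative
  obtain ⟨M0, hM0⟩ : ∃ M0, ∀ x ∈ I, ‖f3 x‖ ≤ M0 := by
    have hc : ContinuousOn f3 I := hm3.continuousOn_iteratedDerivWithin (by norm_num) hu
    exact (isCompact_Icc.exists_bound_of_continuousOn hc)
  set M := max M0 0 with hM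
  have hMnn : 0 ≤ M := le_max_right _ _
  have hM3 : ∀ x ∈ I, ‖f3 x‖ ≤ M := fun x hx => (hM0 x hx).trans (le_max_left _ _)
  set p := phi1 m with hp
  have hppos : 0 < p := phi1_pos m hm
  have hphalf : (1:ℝ)/2 ≤ p := phi1_ge m hm
  refine ⟨3 * (M + 1), by positivity, 1, one_pos, fun τs hτs τt hτt hpos _ => ?_⟩
  set h := τt - τs with hh
  have hne : h ≠ 0 := by intro h0; rw [h0, abs_zero] at hpos; exact lt_irrefl 0 hpos
  set s := Set.uIcc τs τt with hs
  have hsub : s ⊆ I := Set.uIcc_subset_Icc hτs hτt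
  have hconv : Convex ℝ s := by
    rw [hs, Set.uIcc]; exact convex_Icc _ _
  have hτss : τs ∈ s := Set.left_mem_uIcc
  have hτts : τt ∈ s := Set.right_mem_uIcc
  have hdist : ∀ y ∈ s, |y - τt| ≤ |h| := by
    intro y hy
    have e1 : h = τt - τs := hh
    have e2 := le_abs_self (τt - τs)
    have e3 := neg_abs_le (τt - τs)
    rcases Set.mem_uIcc.mp hy with ⟨h1, h2⟩ | ⟨h1, h2⟩
    · rw [abs_of_nonpos (by linarith)]
      rw [e1]; linarith
    · rw [abs_of_nonneg (by linarith)]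
      rw [e1]; linarith
  -- restricted derivatives
  have hd0s : ∀ y ∈ s, HasDerivWithinAt Γ (f1 y) s y :=
    fun y hy => (hd0 y (hsub hy)).mono hsub
  have hd1s : ∀ y ∈ s, HasDerivWithinAt f1 (f2 y) s y :=
    fun y hy => (hd1 y (hsub hy)).mono hsub
  have hd2s : ∀ y ∈ s, HasDerivWithinAt f2 (f3 y) s y :=
    fun y hy => (hd2 y (hsub hy)).mono hsub
  -- first order bound on f2
  have hB1 : ∀ y ∈ s, ‖f2 y - f2 τt‖ ≤ M * |h| := by
    intro y hy
    have := hconv.norm_image_sub_le_of_norm_hasDerivWithin_le hd2s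
      (fun x hx => hM3 x (hsub hx)) hτts hy
    calc ‖f2 y - f2 τt‖ ≤ M * ‖y - τt‖ := this
      _ = M * |y - τt| := by rw [Real.norm_eq_abs]
      _ ≤ M * |h| := by
          exact mul_le_mul_of_nonneg_left (hdist y hy) hMnn
  -- second order: g y = f1 y - (y - τt) • f2 τt
  set g : ℝ → EuclideanSpace ℝ (Fin D) := fun y => f1 y - (y - τt) • f2 τt with hg
  have hgd : ∀ y ∈ s, HasDerivWithinAt g (f2 y - f2 τt) s y := by
    intro y hy
    have h1 : HasDerivWithinAt (fun y : ℝ => (y - τt) • f2 τt) ((1:ℝ) • f2 τt) s y :=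
      ((hasDerivWithinAt_id y s).sub_const τt).smul_const (f2 τt)
    rw [one_smul] at h1
    exact (hd1s y hy).sub h1
  have hB2 : ∀ y ∈ s, ‖f1 y - f1 τt - (y - τt) • f2 τt‖ ≤ (M * |h|) * |h| := by
    intro y hy
    have := hconv.norm_image_sub_le_of_norm_hasDerivWithin_le hgd
      (fun x hx => hB1 x hx) hτts hy
    have heq : g y - g τt = f1 y - f1 τt - (y - τt) • f2 τt := by
      rw [hg]; simp; abel
    rw [heq] at this
    calc ‖f1 y - f1 τt - (y - τt) • f2 τt‖ ≤ M * |h| * ‖y - τt‖ := this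
      _ = M * |h| * |y - τt| := by rw [Real.norm_eq_abs]
      _ ≤ M * |h| * |h| := by
          exact mul_le_mul_of_nonneg_left (hdist y hy) (by positivity)
  -- third order: ψ y = Γ y - (y - τt) • f1 τt - ((y - τt)^2/2) • f2 τt
  set ψ : ℝ → EuclideanSpace ℝ (Fin D) :=
    fun y => Γ y - (y - τt) • f1 τt - ((y - τt)^2/2) • f2 τt with hψ
  have hψd : ∀ y ∈ s, HasDerivWithinAt ψ (f1 y - f1 τt - (y - τt) • f2 τt) s y := by
    intro y hy
    have h1 : HasDerivWithinAt (fun y : ℝ => (y - τt) • f1 τt) ((1:ℝ) • f1 τt) s y :=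
      ((hasDerivWithinAt_id y s).sub_const τt).smul_const (f1 τt)
    rw [one_smul] at h1
    have hq : HasDerivWithinAt (fun y : ℝ => (y - τt)^2/2) (y - τt) s y := by
      have h2 : HasDerivWithinAt (fun y : ℝ => (y - τt)^2)
          (2 * (y - τt)^1 * 1) s y :=
        ((hasDerivWithinAt_id y s).sub_const τt).pow 2
      have h3 := h2.div_const 2
      exact h3.congr_deriv (by ring)
    have h4 : HasDerivWithinAt (fun y : ℝ => ((y - τt)^2/2) • f2 τt)
        ((y - τt) • f2 τt) s y := hq.smul_const (f2 τt)
    exact ((hd0s y hy).sub h1).sub h4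
  have hB3 : ‖ψ τs - ψ τt‖ ≤ (M * |h| * |h|) * |h| := by
    have := hconv.norm_image_sub_le_of_norm_hasDerivWithin_le hψd
      (fun x hx => hB2 x hx) hτts hτss
    calc ‖ψ τs - ψ τt‖ ≤ M * |h| * |h| * ‖τs - τt‖ := this
      _ = M * |h| * |h| * |τs - τt| := by rw [Real.norm_eq_abs]
      _ = M * |h| * |h| * |h| := by rw [hh, abs_sub_comm]
  -- remainders
  set r1 := f1 τs - f1 τt + h • f2 τt with hr1
  set r0 := Γ τs - Γ τt + h • f1 τt - (h^2/2) • f2 τt with hr0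
  have hr1b : ‖r1‖ ≤ (M * |h|) * |h| := by
    have := hB2 τs hτss
    have heq : f1 τs - f1 τt - (τs - τt) • f2 τt = r1 := by
      rw [hr1, hh]
      match_scalars <;> ring
    rwa [heq] at this
  have hr0b : ‖r0‖ ≤ (M * |h| * |h|) * |h| := by
    have heq : ψ τs - ψ τt = r0 := by
      rw [hψ, hr0, hh]
      match_scalars <;> ring
    rw [← heq]
    exact hB3
  -- algebraic identity
  have key : f1 τs -
      ((1 / p / h) • (Γ τt - Γ τs) -
        (phi2 m / p) • f1 τt -
        (phi3 m * h / p) • f2 τt) = r1 + (1/(p*h)) • r0 := by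
    rw [phi2_eq m hm, phi3_eq m hm, ← hp, hr1, hr0]
    have hp0 : p ≠ 0 := ne_of_gt hppos
    match_scalars <;> field_simp <;> ring
  rw [key]
  clear_value h p M s g ψ r1 r0 f1 f2 f3 I
  have hc : |1/(p*h)| = 1/(p*|h|) := by
    rw [abs_div, abs_one, abs_mul, abs_of_pos hppos]
  have hA : (0:ℝ) < |h| := hpos
  have hAne : |h| ≠ 0 := ne_of_gt hA
  calc ‖r1 + (1/(p*h)) • r0‖ ≤ ‖r1‖ + ‖(1/(p*h)) • r0‖ := norm_add_le _ _
    _ = ‖r1‖ + |1/(p*h)| * ‖r0‖ := by rw [norm_smul, Real.norm_eq_abs]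
    _ ≤ (M * |h|) * |h| + (1/(p*|h|)) * ((M * |h| * |h|) * |h|) := by
        rw [hc]
        gcongr
    _ ≤ 3 * (M + 1) * h^2 := by
        have h2 : |h| * |h| = h^2 := by rw [← sq_abs]; ring
        have egen : ∀ A : ℝ, A ≠ 0 → (1/(p*A)) * ((M * A * A) * A) = (M * (A * A))/p := by
          intro A hA0
          field_simp
        have e := egen |h| hAne
        rw [e, h2, mul_assoc M |h| |h|, h2]
        have hq : (0:ℝ) ≤ h^2 := sq_nonneg h
        have hMh : (0:ℝ) ≤ M * h^2 := mul_nonneg hMnn hq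
        have hd : M * h^2 / p ≤ 2 * (M * h^2) := by
          rw [div_le_iff₀ hppos]
          nlinarith [mul_nonneg hMh (by linarith : (0:ℝ) ≤ 2*p - 1)]
        have hexp : 3 * (M + 1) * h^2 = 3 * (M * h^2) + 3 * h^2 := by ring
        linarith
end

section
/- (Local truncation error of the first-order iterative algorithm (DDIM step).) Fix D ∈ ℕ, D ≥ 1. Let I ⊆ ℝ be a compact interval, α, σ : I → ℝ continuously differentiable with α > 0 and σ > 0 on I, f(γ) := α'(γ)/α(γ), g²(γ) := (σ²)'(γ) − 2 f(γ) σ(γ)², NSR(γ) := σ(γ)/α(γ), and let ε_θ : ℝ^D × I → ℝ^D be continuous. Assume NSR is strictly monotone on I with continuously differentiable inverse ψ : NSR(I) → I, let x : I → ℝ^D solve the diffusion ODE x'(γ) = f(γ) x(γ) + (g²(γ)/(2σ(γ))) ε_θ(x(γ), γ) on I, and assume the map E(τ) := ε_θ(x(ψ(τ)), ψ(τ)) is continuously differentiable on NSR(I). Then there exists C > 0 such that for all t, s ∈ I, setting h := NSR(s) − NSR(t): ‖x(s) − (α(s)/α(t)) x(t) − α(s) h ε_θ(x(t), t)‖ ≤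 C h². -/
/-- local truncation error of the first-order iterative algorithm,
i.e. the DDIM step: with `h = NSR(s) − NSR(t)`,
`‖x(s) − (α(s)/α(t)) x(t) − α(s) h ε_θ(x(t), t)‖ ≤ C h²`. -/
theorem stmt10
    (D : ℕ) (hD : 1 ≤ D)
    (a b : ℝ) (hab : a ≤ b) (I : Set ℝ) (hIdef : I = Set.Icc a b)
    (α σ α' σ' : ℝ → ℝ)
    (hα : ∀ γ ∈ I, HasDerivWithinAt α (α' γ) I γ)
    (hσ : ∀ γ ∈ I, HasDerivWithinAt σ (σ' γ) I γ)
    (hα'c : ContinuousOn α' I) (hσ'c : ContinuousOn σ' I)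
    (hαpos : ∀ γ ∈ I, 0 < α γ) (hσpos : ∀ γ ∈ I, 0 < σ γ)
    (f g2 NSR : ℝ → ℝ)
    (hf : ∀ γ, f γ = α' γ / α γ)
    (hg2 : ∀ γ, g2 γ = 2 * σ γ * σ' γ - 2 * f γ * σ γ ^ 2)
    (hNSR : ∀ γ, NSR γ = σ γ / α γ)
    (hmono : StrictMonoOn NSR I ∨ StrictAntiOn NSR I)
    (ψ : ℝ → ℝ) (hψ : ∀ γ ∈ I, ψ (NSR γ) = γ)
    (hψdiff : ContDiffOn ℝ 1 ψ (NSR '' I))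
    (ε : EuclideanSpace ℝ (Fin D) → ℝ → EuclideanSpace ℝ (Fin D))
    (hε : ContinuousOn (fun p : EuclideanSpace ℝ (Fin D) × ℝ => ε p.1 p.2)
      (Set.univ ×ˢ I))
    (x : ℝ → EuclideanSpace ℝ (Fin D))
    (hx : ∀ γ ∈ I,
      HasDerivWithinAt x (f γ • x γ + (g2 γ / (2 * σ γ)) • ε (x γ) γ) I γ)
    (hE : ContDiffOn ℝ 1 (fun τ => ε (x (ψ τ)) (ψ τ)) (NSR '' I)) :
    ∃ C > 0, ∀ t ∈ I, ∀ s ∈ I,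
      ‖x s - (α s / α t) • x t - (α s * (NSR s - NSR t)) • ε (x t) t‖ ≤
        C * (NSR s - NSR t) ^ 2 := by
  rcases eq_or_lt_of_le hab with heq | hlt
  · -- degenerate case `a = b`: the interval is a single point
    refine ⟨1, one_pos, ?_⟩
    intro t ht s hs
    have ht' : t = a := by rw [hIdef, ← heq] at ht; exact le_antisymm ht.2 ht.1
    have hs' : s = a := by rw [hIdef, ← heq] at hs; exact le_antisymm hs.2 hs.1
    have hts : s = t := hs'.trans ht'.symm
    rw [hts]
    have hα0 : α t ≠ 0 := (hαpos t ht).ne'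
    simp [div_self hα0]
  -- main case `a < b`
  have hIc : IsCompact I := by rw [hIdef]; exact isCompact_Icc
  have hIconv : Convex ℝ I := by rw [hIdef]; exact convex_Icc a b
  have hIu : UniqueDiffOn ℝ I := by rw [hIdef]; exact uniqueDiffOn_Icc hlt
  have haI : a ∈ I := by rw [hIdef]; exact ⟨le_refl _, hab⟩
  have hbI : b ∈ I := by rw [hIdef]; exact ⟨hab, le_refl _⟩
  have hαne : ∀ γ ∈ I, α γ ≠ 0 := fun γ hγ => (hαpos γ hγ).ne'
  have hσne : ∀ γ ∈ I, σ γ ≠ 0 := fun γ hγ => (hσpos γ hγ).ne'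
  have contα : ContinuousOn α I := fun γ hγ => (hα γ hγ).continuousWithinAt
  have contσ : ContinuousOn σ I := fun γ hγ => (hσ γ hγ).continuousWithinAt
  have contNSR : ContinuousOn NSR I := by
    have h1 : ContinuousOn (fun γ => σ γ / α γ) I := contσ.div contα hαne
    exact h1.congr fun γ _ => hNSR γ
  set J : Set ℝ := NSR '' I with hJdef
  have hJc : IsCompact J := hIc.image_of_continuousOn contNSR
  have hJconv : Convex ℝ J := ((hIconv.isPreconnected).image NSR contNSR).convex
  have hmemJ : ∀ γ ∈ I, NSR γ ∈ J := fun γ hγ => Set.mem_image_of_mem NSR hγ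
  have hψmaps : ∀ τ ∈ J, ψ τ ∈ I := by
    rintro τ ⟨γ, hγ, rfl⟩
    rw [hψ γ hγ]; exact hγ
  -- derivative of NSR
  set NSR' : ℝ → ℝ := fun γ => (σ' γ * α γ - σ γ * α' γ) / α γ ^ 2 with hNSR'def
  have hNSRd : ∀ γ ∈ I, HasDerivWithinAt NSR (NSR' γ) I γ := by
    intro γ hγ
    have h1 := (hσ γ hγ).div (hα γ hγ) (hαne γ hγ)
    exact h1.congr (fun y _ => hNSR y) (hNSR γ)
  -- derivative of `γ ↦ (α γ)⁻¹ • x γ`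
  have hyd : ∀ γ ∈ I, HasDerivWithinAt (fun u => (α u)⁻¹ • x u)
      (NSR' γ • ε (x γ) γ) I γ := by
    intro γ hγ
    have h1 := ((hα γ hγ).inv (hαne γ hγ)).smul (hx γ hγ)
    refine h1.congr_deriv ?_; simp only [Pi.inv_apply]
    have hαγ : α γ ≠ 0 := hαne γ hγ
    have hσγ : σ γ ≠ 0 := hσne γ hγ
    have e1 : (α γ)⁻¹ * f γ + -α' γ / α γ ^ 2 = 0 := by
      rw [hf]; field_simp; ring
    have e2 : (α γ)⁻¹ * (g2 γ / (2 * σ γ)) = NSR' γ := by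
      rw [hg2, hf, hNSR'def]; field_simp
    rw [smul_add, smul_smul, smul_smul, e2, add_right_comm, ← add_smul, e1,
      zero_smul, zero_add]
  -- `ψ' (NSR γ) * NSR' γ = 1`
  have hψdiff' : DifferentiableOn ℝ ψ J := hψdiff.differentiableOn one_ne_zero
  have hkey : ∀ γ ∈ I, derivWithin ψ J (NSR γ) * NSR' γ = 1 := by
    intro γ hγ
    have hψτ : HasDerivWithinAt ψ (derivWithin ψ J (NSR γ)) J (NSR γ) :=
      (hψdiff' (NSR γ) (hmemJ γ hγ)).hasDerivWithinAt
    have hcomp : HasDerivWithinAt (ψ ∘ NSR)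
        (derivWithin ψ J (NSR γ) * NSR' γ) I γ :=
      hψτ.comp γ (hNSRd γ hγ) (fun u hu => hmemJ u hu)
    have hid : HasDerivWithinAt (fun u : ℝ => u)
        (derivWithin ψ J (NSR γ) * NSR' γ) I γ :=
      hcomp.congr (fun u hu => (hψ u hu).symm) (hψ γ hγ).symm
    have h1 := hid.derivWithin (hIu γ hγ)
    have h2 := (hasDerivWithinAt_id γ I).derivWithin (hIu γ hγ)
    rw [← h1]
    exact h2
  -- derivative of `F τ = (α (ψ τ))⁻¹ • x (ψ τ)` within `J`
  set F : ℝ → EuclideanSpace ℝ (Fin D) := fun τ => (α (ψ τ))⁻¹ • x (ψ τ) with hFdef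
  have hFd : ∀ τ ∈ J, HasDerivWithinAt F (ε (x (ψ τ)) (ψ τ)) J τ := by
    rintro τ ⟨γ, hγ, rfl⟩
    have hψτ : HasDerivWithinAt ψ (derivWithin ψ J (NSR γ)) J (NSR γ) :=
      (hψdiff' (NSR γ) (hmemJ γ hγ)).hasDerivWithinAt
    have hy : HasDerivWithinAt (fun u => (α u)⁻¹ • x u)
        (NSR' γ • ε (x γ) γ) I (ψ (NSR γ)) := by
      rw [hψ γ hγ]; exact hyd γ hγ
    have hc := hy.scomp (NSR γ) hψτ (fun u hu => hψmaps u hu)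
    have : derivWithin ψ J (NSR γ) • NSR' γ • ε (x γ) γ = ε (x γ) γ := by
      rw [smul_smul, hkey γ hγ, one_smul]
    rw [this] at hc
    have heq : ε (x (ψ (NSR γ))) (ψ (NSR γ)) = ε (x γ) γ := by rw [hψ γ hγ]
    rw [heq]
    exact hc
  -- Lipschitz bound for `E` on `J`
  have hJu : UniqueDiffOn ℝ J := by
    apply uniqueDiffOn_convex hJconv
    have hne : NSR a ≠ NSR b := by
      rcases hmono with hm | hm
      · exact (hm haI hbI hlt).ne
      · exact (hm haI hbI hlt).ne'
    have hminJ : min (NSR a) (NSR b) ∈ J := by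
      rcases min_cases (NSR a) (NSR b) with ⟨h, _⟩ | ⟨h, _⟩ <;> rw [h]
      exacts [hmemJ a haI, hmemJ b hbI]
    have hmaxJ : max (NSR a) (NSR b) ∈ J := by
      rcases max_cases (NSR a) (NSR b) with ⟨h, _⟩ | ⟨h, _⟩ <;> rw [h]
      exacts [hmemJ a haI, hmemJ b hbI]
    have hsub : Set.Icc (min (NSR a) (NSR b)) (max (NSR a) (NSR b)) ⊆ J :=
      (hJconv.ordConnected).out hminJ hmaxJ
    have h2 : Set.Ioo (min (NSR a) (NSR b)) (max (NSR a) (NSR b)) ⊆ interior J := by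
      rw [← interior_Icc]
      exact interior_mono hsub
    exact Set.Nonempty.mono h2 (Set.nonempty_Ioo.2 (min_lt_max.2 hne))
  set E : ℝ → EuclideanSpace ℝ (Fin D) := fun τ => ε (x (ψ τ)) (ψ τ) with hEdef
  have hE'cont : ContinuousOn (derivWithin E J) J :=
    hE.continuousOn_derivWithin hJu le_rfl
  obtain ⟨M, hM⟩ := hJc.exists_bound_of_continuousOn hE'cont
  set M' : ℝ := max M 0 with hM'def
  have hM'0 : 0 ≤ M' := le_max_right _ _
  have hElip : ∀ u ∈ J, ∀ v ∈ J, ‖E u - E v‖ ≤ M' * ‖u - v‖ := by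
    intro u hu v hv
    exact hJconv.norm_image_sub_le_of_norm_hasDerivWithin_le
      (fun τ hτ => ((hE.differentiableOn one_ne_zero) τ hτ).hasDerivWithinAt)
      (fun τ hτ => (hM τ hτ).trans (le_max_left _ _)) hv hu
  -- bound on α
  obtain ⟨A, hA⟩ := hIc.exists_bound_of_continuousOn contα
  have hA0 : 0 ≤ A := le_trans (norm_nonneg _) (hA a haI)
  -- the constant
  refine ⟨(A + 1) * (M' + 1), by positivity, ?_⟩
  intro t ht s hs
  set τt : ℝ := NSR t with hτt
  set τs : ℝ := NSR s with hτs
  set h : ℝ := τs - τt with hh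
  have hτtJ : τt ∈ J := hmemJ t ht
  have hτsJ : τs ∈ J := hmemJ s hs
  have hKsub : Set.uIcc τt τs ⊆ J := (hJconv.ordConnected).uIcc_subset hτtJ hτsJ
  have hψτt : ψ τt = t := hψ t ht
  have hψτs : ψ τs = s := hψ s hs
  -- derivative of `G τ = F τ - τ • ε (x t) t` on the interval
  set G : ℝ → EuclideanSpace ℝ (Fin D) := fun τ => F τ - τ • ε (x t) t with hGdef
  have hGd : ∀ τ ∈ Set.uIcc τt τs,
      HasDerivWithinAt G (E τ - ε (x t) t) (Set.uIcc τt τs) τ := by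
    intro τ hτ
    have hconst : HasDerivWithinAt (fun τ : ℝ => τ • ε (x t) t) (ε (x t) t)
        (Set.uIcc τt τs) τ := by
      simpa using (hasDerivWithinAt_id τ (Set.uIcc τt τs)).smul_const (ε (x t) t)
    exact ((hFd τ (hKsub hτ)).mono hKsub).sub hconst
  have hGbound : ∀ τ ∈ Set.uIcc τt τs, ‖E τ - ε (x t) t‖ ≤ M' * |h| := by
    intro τ hτ
    have h1 : ε (x t) t = E τt := by rw [hEdef]; simp [hψτt]
    rw [h1]
    refine (hElip τ (hKsub hτ) τt hτtJ).trans ?_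
    have h2 : |τ - τt| ≤ |h| := by
      rw [Set.mem_uIcc] at hτ
      have h3 := le_abs_self h
      have h4 := neg_abs_le h
      rw [abs_sub_le_iff]
      rcases hτ with ⟨ha', hb'⟩ | ⟨ha', hb'⟩ <;>
        exact ⟨by simp only [hh] at h3 h4 ⊢; linarith,
               by simp only [hh] at h3 h4 ⊢; linarith⟩
    have := mul_le_mul_of_nonneg_left h2 hM'0
    simpa [Real.norm_eq_abs] using this
  have hmain : ‖G τs - G τt‖ ≤ (M' * |h|) * ‖τs - τt‖ :=
    (convex_uIcc τt τs).norm_image_sub_le_of_norm_hasDerivWithin_le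
      hGd hGbound Set.left_mem_uIcc Set.right_mem_uIcc
  have hGdiff : G τs - G τt =
      (α s)⁻¹ • x s - (α t)⁻¹ • x t - h • ε (x t) t := by
    rw [hGdef]
    simp only [hFdef, hψτs, hψτt]
    rw [hh, sub_smul]
    abel
  have hscale : x s - (α s / α t) • x t - (α s * h) • ε (x t) t
      = α s • (G τs - G τt) := by
    rw [hGdiff, smul_sub, smul_sub, smul_smul, smul_smul, smul_smul]
    rw [mul_inv_cancel₀ (hαne s hs), one_smul, div_eq_mul_inv]
  calc ‖x s - (α s / α t) • x t - (α s * h) • ε (x t) t‖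
      = ‖α s‖ * ‖G τs - G τt‖ := by rw [hscale, norm_smul]
    _ ≤ A * ((M' * |h|) * ‖τs - τt‖) := by
        apply mul_le_mul (hA s hs) hmain (norm_nonneg _) hA0
    _ = A * M' * h ^ 2 := by
        have h5 : ‖τs - τt‖ = |h| := by rw [hh, Real.norm_eq_abs]
        rw [h5, mul_assoc, abs_mul_abs_self, ← pow_two]
        ring
    _ ≤ (A + 1) * (M' + 1) * h ^ 2 := by nlinarith [sq_nonneg h, sq_nonneg (h*1)]
end

section
/- (Single-step local truncation error of SciRE-Solver-2.) Fix D ∈ ℕ, D ≥ 1, and m ∈ ℕ with m ≥ 3; set φ₁(m) := Σ_{k=1}^{m} (−1)^{k−1}/k! and r₁ := 1/2. Let I ⊆ ℝ be a compact interval, α, σ : I → ℝ continuously differentiable with α > 0 and σ > 0 on I, f(γ) := α'(γ)/α(γ), g²(γ) := (σ²)'(γ) − 2 f(γ) σ(γ)², NSR(γ) := σ(γ)/α(γ) strictly monotone with continuously differentiable inverse ψ, and let ε_θ : ℝ^D × I → ℝ^D be continuous with ε_θ(·, γ) Lipschitz on ℝ^D with a Lipschitz constant L uniform in γ ∈ I.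 Let x : I → ℝ^D solve the diffusion ODE x'(γ) = f(γ) x(γ) + (g²(γ)/(2σ(γ))) ε_θ(x(γ), γ) on I, and assume E(τ) := ε_θ(x(ψ(τ)), ψ(τ)) is three times continuously differentiable on NSR(I). For t, s ∈ I set h := NSR(s) − NSR(t), s₁ := ψ(NSR(t) + r₁ h), u₁ := (α(s₁)/α(t)) x(t) + α(s₁) r₁ h ε_θ(x(t), t), and x̃ := (α(s)/α(t)) x(t) + α(s) h ε_θ(x(t), t) + α(s) (h/(2 φ₁(m) r₁)) (ε_θ(u₁, s₁) − ε_θ(x(t), t)). Then there exists C > 0, independent of t and s, such that ‖x(s) − x̃‖ ≤ C h². -/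
lemma phi1_lb {m : ℕ} (hm : 3 ≤ m) : (1/4 : ℝ) ≤ phi1 m := by
  have hIcc : Finset.Icc 1 m = Finset.Ioc 0 m := rfl
  have hsplit := Finset.sum_Ioc_consecutive (f := fun k => (-1 : ℝ) ^ (k - 1) / Nat.factorial k)
      (Nat.zero_le 2) (by omega : 2 ≤ m)
  have h02 : ∑ k ∈ Finset.Ioc 0 2, (-1 : ℝ) ^ (k - 1) / Nat.factorial k = 1/2 := by
    have : Finset.Ioc 0 2 = {1, 2} := rfl
    rw [this]; norm_num [Nat.factorial]
  have htail : |∑ k ∈ Finset.Ioc 2 m, (-1 : ℝ) ^ (k - 1) / Nat.factorial k| ≤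
      ∑ k ∈ Finset.Ioc 2 m, (1 : ℝ) / Nat.factorial k := by
    refine (Finset.abs_sum_le_sum_abs _ _).trans ?_
    refine Finset.sum_le_sum fun k _ => ?_
    rw [abs_div, abs_pow, abs_neg, abs_one, one_pow]
    simp [Nat.abs_cast]
  have hfac : ∑ k ∈ Finset.Ioc 2 m, (1 : ℝ) / Nat.factorial k ≤ Real.exp 1 - 5/2 := by
    have hr := Real.sum_le_exp_of_nonneg (x := 1) zero_le_one (m + 1)
    simp only [one_pow] at hr
    have hins : (1:ℝ) / Nat.factorial 0 + ∑ i ∈ (Finset.Icc 0 m).erase 0, (1:ℝ) / Nat.factorial i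
        = ∑ i ∈ Finset.Icc 0 m, (1:ℝ) / Nat.factorial i :=
      Finset.add_sum_erase _ (fun k => (1:ℝ) / Nat.factorial k) (Finset.mem_Icc.mpr ⟨le_rfl, Nat.zero_le m⟩)
    have herase : (Finset.Icc 0 m).erase 0 = Finset.Ioc 0 m := Finset.Icc_erase_left 0 m
    have hrange : Finset.range (m + 1) = Finset.Icc 0 m := by
      rw [Finset.range_eq_Ico, Finset.Ico_add_one_right_eq_Icc]
    have hsplit2 := Finset.sum_Ioc_consecutive (f := fun k => (1 : ℝ) / Nat.factorial k)
      (Nat.zero_le 2) (by omega : 2 ≤ m)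
    have h02' : ∑ k ∈ Finset.Ioc 0 2, (1 : ℝ) / Nat.factorial k = 3/2 := by
      have : Finset.Ioc 0 2 = {1, 2} := rfl
      rw [this]; norm_num [Nat.factorial]
    rw [hrange] at hr
    rw [herase] at hins
    have hins' : ∑ i ∈ Finset.Ioc 0 m, (1:ℝ) / Nat.factorial i
        = ∑ i ∈ Finset.Icc 0 m, (1:ℝ) / Nat.factorial i - 1 := by
      rw [← hins]; norm_num [Nat.factorial]
    have : ∑ i ∈ Finset.Ioc 0 m, (1:ℝ) / Nat.factorial i ≤ Real.exp 1 - 1 := by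
      rw [hins']; linarith
    linarith [hsplit2, h02']
  have hexp := Real.exp_one_lt_d9
  rw [phi1, hIcc, ← hsplit, h02]
  have := abs_le.1 htail
  norm_num at hexp ⊢
  linarith [this.1]

set_option maxHeartbeats 2000000 in
/-- single-step local truncation error of SciRE-Solver-2: one step
of Algorithm 1 (with `r₁ = 1/2`) started from the exact value `x(t)` satisfies
`‖x(s) − x̃‖ ≤ C h²` with `h = NSR(s) − NSR(t)`, `C` independent of `t, s`. -/
theorem stmt11
    (D : ℕ) (hD : 1 ≤ D) (m : ℕ) (hm : 3 ≤ m)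
    (a b : ℝ) (hab : a ≤ b) (I : Set ℝ) (hIdef : I = Set.Icc a b)
    (α σ α' σ' : ℝ → ℝ)
    (hα : ∀ γ ∈ I, HasDerivWithinAt α (α' γ) I γ)
    (hσ : ∀ γ ∈ I, HasDerivWithinAt σ (σ' γ) I γ)
    (hα'c : ContinuousOn α' I) (hσ'c : ContinuousOn σ' I)
    (hαpos : ∀ γ ∈ I, 0 < α γ) (hσpos : ∀ γ ∈ I, 0 < σ γ)
    (f g2 NSR : ℝ → ℝ)
    (hf : ∀ γ, f γ = α' γ / α γ)
    (hg2 : ∀ γ, g2 γ = 2 * σ γ * σ' γ - 2 * f γ * σ γ ^ 2)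
    (hNSR : ∀ γ, NSR γ = σ γ / α γ)
    (hmono : StrictMonoOn NSR I ∨ StrictAntiOn NSR I)
    (ψ : ℝ → ℝ) (hψ : ∀ γ ∈ I, ψ (NSR γ) = γ)
    (hψdiff : ContDiffOn ℝ 1 ψ (NSR '' I))
    (ε : EuclideanSpace ℝ (Fin D) → ℝ → EuclideanSpace ℝ (Fin D))
    (hε : ContinuousOn (fun p : EuclideanSpace ℝ (Fin D) × ℝ => ε p.1 p.2)
      (Set.univ ×ˢ I))
    (L : NNReal) (hL : ∀ γ ∈ I, LipschitzWith L fun v => ε v γ)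
    (x : ℝ → EuclideanSpace ℝ (Fin D))
    (hx : ∀ γ ∈ I,
      HasDerivWithinAt x (f γ • x γ + (g2 γ / (2 * σ γ)) • ε (x γ) γ) I γ)
    (hE : ContDiffOn ℝ 3 (fun τ => ε (x (ψ τ)) (ψ τ)) (NSR '' I)) :
    ∃ C > 0, ∀ t ∈ I, ∀ s ∈ I,
      let h := NSR s - NSR t
      let s₁ := ψ (NSR t + (1 / 2 : ℝ) * h)
      let u₁ := (α s₁ / α t) • x t + (α s₁ * ((1 / 2 : ℝ) * h)) • ε (x t) t
      let xtilde := (α s / α t) • x t + (α s * h) • ε (x t) t +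
        (α s * (h / (2 * phi1 m * (1 / 2 : ℝ)))) • (ε u₁ s₁ - ε (x t) t)
      ‖x s - xtilde‖ ≤ C * h ^ 2 := by
  subst hIdef
  have hαne : ∀ γ ∈ Set.Icc a b, α γ ≠ 0 := fun γ hγ => (hαpos γ hγ).ne'
  rcases eq_or_lt_of_le hab with heq | hab'
  · -- degenerate case: I = {a}
    refine ⟨1, one_pos, ?_⟩
    intro t ht s hs
    have hs' : s = t := by
      subst heq
      have h1 : t = a := le_antisymm ht.2 ht.1
      have h2 : s = a := le_antisymm hs.2 hs.1
      rw [h1, h2]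
    rw [hs']
    have key : ‖x t - ((α t / α t) • x t + (α t * (NSR t - NSR t)) • ε (x t) t +
        (α t * ((NSR t - NSR t) / (2 * phi1 m * (1 / 2 : ℝ)))) •
          (ε ((α (ψ (NSR t + (1 / 2 : ℝ) * (NSR t - NSR t))) / α t) • x t +
              (α (ψ (NSR t + (1 / 2 : ℝ) * (NSR t - NSR t))) *
                ((1 / 2 : ℝ) * (NSR t - NSR t))) • ε (x t) t)
            (ψ (NSR t + (1 / 2 : ℝ) * (NSR t - NSR t))) - ε (x t) t))‖
        ≤ 1 * (NSR t - NSR t) ^ 2 := by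
      rw [div_self (hαne t ht)]
      simp
    exact key
  · -- main case: a < b
    have hIcomp : IsCompact (Set.Icc a b) := isCompact_Icc
    have hαc : ContinuousOn α (Set.Icc a b) := fun γ hγ => (hα γ hγ).continuousWithinAt
    have hσc : ContinuousOn σ (Set.Icc a b) := fun γ hγ => (hσ γ hγ).continuousWithinAt
    have hxc : ContinuousOn x (Set.Icc a b) := fun γ hγ => (hx γ hγ).continuousWithinAt
    have hNSRc : ContinuousOn NSR (Set.Icc a b) := by
      have h1 : ContinuousOn (fun γ => σ γ / α γ) (Set.Icc a b) := hσc.div hαc hαne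
      exact h1.congr fun γ _ => hNSR γ
    set J := NSR '' Set.Icc a b with hJdef
    have hJcomp : IsCompact J := hIcomp.image_of_continuousOn hNSRc
    have hJne : J.Nonempty := ⟨NSR a, a, ⟨le_rfl, hab⟩, rfl⟩
    have hJord : J.OrdConnected := ((isPreconnected_Icc).image NSR hNSRc).ordConnected
    set c := sInf J with hcdef
    set d := sSup J with hddef
    have hcJ : c ∈ J := hJcomp.sInf_mem hJne
    have hdJ : d ∈ J := hJcomp.sSup_mem hJne
    have hJsub : J ⊆ Set.Icc c d := fun τ hτ =>
      ⟨csInf_le hJcomp.bddBelow hτ, le_csSup hJcomp.bddAbove hτ⟩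
    have hJeq : J = Set.Icc c d := Set.Subset.antisymm hJsub (hJord.out hcJ hdJ)
    have hcd : c < d := by
      have hamem : NSR a ∈ J := ⟨a, ⟨le_rfl, hab⟩, rfl⟩
      have hbmem : NSR b ∈ J := ⟨b, ⟨hab, le_rfl⟩, rfl⟩
      have hne : NSR a ≠ NSR b := by
        rcases hmono with hmo | hmo
        · exact ne_of_lt (hmo ⟨le_rfl, hab⟩ ⟨hab, le_rfl⟩ hab')
        · exact ne_of_gt (hmo ⟨le_rfl, hab⟩ ⟨hab, le_rfl⟩ hab')
      rcases lt_or_ge c d with h1 | h1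
      · exact h1
      · exfalso
        have h2 := hJsub hamem
        have h3 := hJsub hbmem
        exact hne (by linarith [h2.1, h2.2, h3.1, h3.2] : NSR a = NSR b)
    have hU : UniqueDiffOn ℝ J := hJeq ▸ uniqueDiffOn_Icc hcd
    have hJconv : Convex ℝ J := hJeq ▸ convex_Icc c d
    have hψJ : Set.MapsTo ψ J (Set.Icc a b) := by
      rintro τ ⟨γ, hγ, rfl⟩
      rw [hψ γ hγ]; exact hγ
    have hψNSR : ∀ τ ∈ J, NSR (ψ τ) = τ := by
      rintro τ ⟨γ, hγ, rfl⟩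
      rw [hψ γ hγ]
    set NSR' : ℝ → ℝ := fun γ => (σ' γ * α γ - σ γ * α' γ) / α γ ^ 2 with hNSR'def
    have hNSRd : ∀ γ ∈ Set.Icc a b, HasDerivWithinAt NSR (NSR' γ) (Set.Icc a b) γ := by
      intro γ hγ
      have h1 := (hσ γ hγ).div (hα γ hγ) (hαne γ hγ)
      exact h1.congr (fun y _ => hNSR y) (hNSR γ)
    set z : ℝ → EuclideanSpace ℝ (Fin D) := fun γ => (α γ)⁻¹ • x γ with hzdef
    have hzd : ∀ γ ∈ Set.Icc a b,
        HasDerivWithinAt z (NSR' γ • ε (x γ) γ) (Set.Icc a b) γ := by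
      intro γ hγ
      have hinv : HasDerivWithinAt (fun y => (α y)⁻¹) (-α' γ / α γ ^ 2) (Set.Icc a b) γ :=
        (hα γ hγ).inv (hαne γ hγ)
      have h1 := hinv.smul (hx γ hγ)
      refine h1.congr_deriv ?_
      rw [hg2 γ, hf γ]
      have hσ0 : σ γ ≠ 0 := (hσpos γ hγ).ne'
      have hα0 : α γ ≠ 0 := hαne γ hγ
      match_scalars <;> (try simp only [hNSR'def]) <;> (try field_simp) <;> (try ring)
    set E : ℝ → EuclideanSpace ℝ (Fin D) := fun τ => ε (x (ψ τ)) (ψ τ) with hEdef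
    set F : ℝ → EuclideanSpace ℝ (Fin D) := fun τ => z (ψ τ) with hFdef
    have hFd : ∀ τ ∈ J, HasDerivWithinAt F (E τ) J τ := by
      intro τ hτ
      have hγI : ψ τ ∈ Set.Icc a b := hψJ hτ
      have hψd : HasDerivWithinAt ψ (derivWithin ψ J τ) J τ :=
        ((hψdiff.differentiableOn one_ne_zero) τ hτ).hasDerivWithinAt
      have hcomp : HasDerivWithinAt (z ∘ ψ)
          (derivWithin ψ J τ • (NSR' (ψ τ) • ε (x (ψ τ)) (ψ τ))) J τ :=
        (hzd (ψ τ) hγI).scomp τ hψd hψJ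
      have hid : HasDerivWithinAt (NSR ∘ ψ) (NSR' (ψ τ) * derivWithin ψ J τ) J τ :=
        (hNSRd (ψ τ) hγI).comp τ hψd hψJ
      have hid2 : HasDerivWithinAt id (NSR' (ψ τ) * derivWithin ψ J τ) J τ :=
        hid.congr (fun y hy => (hψNSR y hy).symm) (hψNSR τ hτ).symm
      have hone : NSR' (ψ τ) * derivWithin ψ J τ = 1 := by
        rw [← hid2.derivWithin (hU τ hτ)]
        exact derivWithin_id τ J (hU τ hτ)
      have : HasDerivWithinAt F ((derivWithin ψ J τ * NSR' (ψ τ)) • ε (x (ψ τ)) (ψ τ)) J τ := by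
        rw [← smul_smul]; exact hcomp
      rw [mul_comm, hone, one_smul] at this
      exact this
    -- Lipschitz bound for E on J
    have hEd : ∀ u ∈ J, HasDerivWithinAt E (derivWithin E J u) J u := fun u hu =>
      ((hE.differentiableOn (by norm_num)) u hu).hasDerivWithinAt
    have hE'c : ContinuousOn (derivWithin E J) J :=
      hE.continuousOn_derivWithin hU (by norm_num)
    obtain ⟨M0, hM0⟩ := hJcomp.exists_bound_of_continuousOn hE'c
    set M := max M0 0 with hMdef
    have hMnn : 0 ≤ M := le_max_right _ _
    have hM1 : ∀ u ∈ J, ‖derivWithin E J u‖ ≤ M := fun u hu =>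
      (hM0 u hu).trans (le_max_left _ _)
    have hElip : ∀ τa ∈ J, ∀ τb ∈ J, ‖E τa - E τb‖ ≤ M * |τa - τb| := by
      intro τa ha τb hb
      have h1 := hJconv.norm_image_sub_le_of_norm_hasDerivWithin_le hEd hM1 hb ha
      rwa [Real.norm_eq_abs] at h1
    -- bound for α on I
    obtain ⟨A0, hA0⟩ := hIcomp.exists_bound_of_continuousOn hαc
    set A := max A0 1 with hAdef
    have hA1 : (1 : ℝ) ≤ A := le_max_right _ _
    have hApos : 0 < A := lt_of_lt_of_le one_pos hA1
    have hAb : ∀ γ ∈ Set.Icc a b, |α γ| ≤ A := fun γ hγ => by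
      have := hA0 γ hγ
      rw [Real.norm_eq_abs] at this
      exact this.trans (le_max_left _ _)
    -- diameter of J
    set H := d - c with hHdef
    have hHnn : 0 ≤ H := by rw [hHdef]; linarith
    have hHb : ∀ τa ∈ J, ∀ τb ∈ J, |τa - τb| ≤ H := by
      intro τa ha τb hb
      have h1 := hJsub ha; have h2 := hJsub hb
      rw [abs_le]
      constructor <;> [linarith [h1.1, h2.2]; linarith [h1.2, h2.1]]
    -- exact solution formula
    have hsol : ∀ γ ∈ Set.Icc a b, x γ = α γ • F (NSR γ) := by
      intro γ hγ
      have h1 : F (NSR γ) = z γ := by rw [hFdef]; simp only [hψ γ hγ]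
      rw [h1, hzdef]
      simp only
      rw [smul_smul, mul_inv_cancel₀ (hαne γ hγ), one_smul]
    have hφ : (1/4 : ℝ) ≤ phi1 m := phi1_lb hm
    have hφpos : 0 < phi1 m := lt_of_lt_of_le (by norm_num) hφ
    -- the constant
    refine ⟨3 * A * M + 2 * (L : ℝ) * A * A * M * H + 1, by positivity, ?_⟩
    have key : ∀ t ∈ Set.Icc a b, ∀ s ∈ Set.Icc a b,
        ‖x s - ((α s / α t) • x t + (α s * (NSR s - NSR t)) • ε (x t) t +
          (α s * ((NSR s - NSR t) / (2 * phi1 m * (1 / 2 : ℝ)))) •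
            (ε ((α (ψ (NSR t + (1 / 2 : ℝ) * (NSR s - NSR t))) / α t) • x t +
                (α (ψ (NSR t + (1 / 2 : ℝ) * (NSR s - NSR t))) *
                  ((1 / 2 : ℝ) * (NSR s - NSR t))) • ε (x t) t)
              (ψ (NSR t + (1 / 2 : ℝ) * (NSR s - NSR t))) - ε (x t) t))‖
          ≤ (3 * A * M + 2 * (L : ℝ) * A * A * M * H + 1) * (NSR s - NSR t) ^ 2 := by
      intro t ht s hs
      set τ0 := NSR t with hτ0def
      set τ2 := NSR s with hτ2def
      have hτ0J : τ0 ∈ J := ⟨t, ht, rfl⟩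
      have hτ2J : τ2 ∈ J := ⟨s, hs, rfl⟩
      set h := τ2 - τ0 with hhdef
      set τ1 := τ0 + (1/2 : ℝ) * h with hτ1def
      set K := Set.uIcc τ0 τ2 with hKdef
      have hKsub : K ⊆ J := hJord.uIcc_subset hτ0J hτ2J
      have hKconv : Convex ℝ K := convex_uIcc τ0 τ2
      have hτ0K : τ0 ∈ K := Set.left_mem_uIcc
      have hτ2K : τ2 ∈ K := Set.right_mem_uIcc
      have hτ1K : τ1 ∈ K := by
        rw [hKdef, Set.mem_uIcc]
        have hmid : τ1 = τ0 + (1/2 : ℝ) * (τ2 - τ0) := by rw [hτ1def, hhdef]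
        clear_value τ1 h τ2 τ0
        rcases le_total τ0 τ2 with hle | hle
        · left; constructor <;> linarith [hmid]
        · right; constructor <;> linarith [hmid]
      have hτ1J : τ1 ∈ J := hKsub hτ1K
      set s₁ := ψ τ1 with hs₁def
      have hs₁I : s₁ ∈ Set.Icc a b := hψJ hτ1J
      have hψτ0 : ψ τ0 = t := hψ t ht
      have hNSRs₁ : NSR s₁ = τ1 := hψNSR τ1 hτ1J
      have hEτ0 : E τ0 = ε (x t) t := by rw [hEdef]; simp only [hψτ0]
      have hEτ1 : E τ1 = ε (x s₁) s₁ := rfl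
      have hτ1diff : τ1 - τ0 = (1/2 : ℝ) * h := by rw [hτ1def]; ring
      -- mean value estimates
      have hGd : ∀ u ∈ K, HasDerivWithinAt (fun u => F u - u • E τ0) (E u - E τ0) K u := by
        intro u hu
        have h1 := (hFd u (hKsub hu)).mono hKsub
        have h2 := (hasDerivWithinAt_id u K).smul_const (E τ0)
        have h3 := h1.sub h2
        rw [one_smul] at h3
        exact h3
      have hbd : ∀ u ∈ K, ‖E u - E τ0‖ ≤ M * |h| := by
        intro u hu
        refine (hElip u (hKsub hu) τ0 hτ0J).trans ?_
        have h2 : |u - τ0| ≤ |h| := by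
          rw [hKdef, Set.mem_uIcc] at hu
          rcases abs_cases h with ⟨he, hp⟩ | ⟨he, hp⟩ <;>
            rcases hu with ⟨h3, h4⟩ | ⟨h3, h4⟩ <;> rw [abs_le] <;> constructor <;> linarith
        exact mul_le_mul_of_nonneg_left h2 hMnn
      have hMVT : ∀ u ∈ K, ‖F u - F τ0 - (u - τ0) • E τ0‖ ≤ M * |h| * |u - τ0| := by
        intro u hu
        have h1 := hKconv.norm_image_sub_le_of_norm_hasDerivWithin_le hGd hbd hτ0K hu
        have h2 : F u - F τ0 - (u - τ0) • E τ0
            = (fun u => F u - u • E τ0) u - (fun u => F u - u • E τ0) τ0 := by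
          simp only
          rw [sub_smul]; abel
        rw [h2]
        exact h1.trans_eq (by rw [Real.norm_eq_abs])
      have est1 : ‖F τ2 - F τ0 - h • E τ0‖ ≤ M * |h| * |h| := by
        have h1 := hMVT τ2 hτ2K
        rw [← hhdef] at h1
        exact h1
      -- solution formula
      have hxt : x t = α t • F τ0 := by
        have h1 := hsol t ht; rwa [← hτ0def] at h1
      have hxs : x s = α s • F τ2 := by
        have h1 := hsol s hs; rwa [← hτ2def] at h1
      have hxs₁ : x s₁ = α s₁ • F τ1 := by
        have h1 := hsol s₁ hs₁I; rwa [hNSRs₁] at h1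
      set u₁ := (α s₁ / α t) • x t + (α s₁ * ((1/2 : ℝ) * h)) • ε (x t) t with hu₁def
      have hu₁ : u₁ = α s₁ • (F τ0 + ((1/2 : ℝ) * h) • E τ0) := by
        rw [hu₁def, ← hEτ0, hxt]
        have hα0 : α t ≠ 0 := hαne t ht
        match_scalars <;> field_simp
      have hu₁err : ‖u₁ - x s₁‖ ≤ A * (M * |h| * ((1/2 : ℝ) * |h|)) := by
        rw [hu₁, hxs₁, ← smul_sub, norm_smul, Real.norm_eq_abs]
        have h1 : F τ0 + ((1/2 : ℝ) * h) • E τ0 - F τ1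
            = -(F τ1 - F τ0 - (τ1 - τ0) • E τ0) := by
          rw [hτ1diff]; abel
        rw [h1, norm_neg]
        refine mul_le_mul (hAb s₁ hs₁I) ?_ (norm_nonneg _) hApos.le
        refine (hMVT τ1 hτ1K).trans_eq ?_
        rw [hτ1diff, abs_mul]
        norm_num
      have hεb : ‖ε u₁ s₁ - ε (x t) t‖
          ≤ (L : ℝ) * (A * (M * |h| * ((1/2 : ℝ) * |h|))) + M * ((1/2 : ℝ) * |h|) := by
        have h1 : ε u₁ s₁ - ε (x t) t = (ε u₁ s₁ - ε (x s₁) s₁) + (E τ1 - E τ0) := by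
          rw [hEτ0, hEτ1]; abel
        rw [h1]
        refine (norm_add_le _ _).trans (add_le_add ?_ ?_)
        · have h2 := (hL s₁ hs₁I).dist_le_mul u₁ (x s₁)
          rw [dist_eq_norm, dist_eq_norm] at h2
          exact h2.trans (mul_le_mul_of_nonneg_left hu₁err L.coe_nonneg)
        · have h3 := hElip τ1 hτ1J τ0 hτ0J
          rw [hτ1diff, abs_mul] at h3
          refine h3.trans_eq ?_
          norm_num
      -- assemble
      have hcoef : (2 : ℝ) * phi1 m * (1/2 : ℝ) = phi1 m := by ring
      rw [hcoef]
      set w := ε u₁ s₁ - ε (x t) t with hwdef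
      have hsplit : x s - ((α s / α t) • x t + (α s * h) • ε (x t) t
            + (α s * (h / phi1 m)) • w)
          = α s • ((F τ2 - F τ0 - h • E τ0) - (h / phi1 m) • w) := by
        rw [hxs, ← hEτ0, hxt]
        have hα0 : α t ≠ 0 := hαne t ht
        match_scalars <;> field_simp <;> ring
      rw [hsplit, norm_smul, Real.norm_eq_abs]
      have habs : |h| ≤ H := by
        have h1 := hHb τ2 hτ2J τ0 hτ0J
        rwa [← hhdef] at h1
      have hdiv : |h| / phi1 m ≤ 4 * |h| := by
        have h1 : |h| / phi1 m ≤ |h| / (1/4 : ℝ) :=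
          div_le_div_of_nonneg_left (abs_nonneg h) (by norm_num) hφ
        refine h1.trans_eq ?_
        rw [div_eq_mul_inv]
        norm_num [mul_comm]
      have hh2 : h ^ 2 = |h| * |h| := by rw [abs_mul_abs_self, sq]
      have step1 : |α s| * ‖(F τ2 - F τ0 - h • E τ0) - (h / phi1 m) • w‖
          ≤ A * (M * |h| * |h| + (|h| / phi1 m) * ((L : ℝ) * (A * (M * |h| * ((1/2 : ℝ) * |h|)))
              + M * ((1/2 : ℝ) * |h|))) := by
        refine mul_le_mul (hAb s hs) ?_ (norm_nonneg _) hApos.le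
        refine (norm_sub_le _ _).trans (add_le_add est1 ?_)
        rw [norm_smul, Real.norm_eq_abs, abs_div, abs_of_pos hφpos]
        exact mul_le_mul_of_nonneg_left hεb (by positivity)
      refine step1.trans ?_
      rw [hh2]
      have hq : (|h| / phi1 m) * ((L : ℝ) * (A * (M * |h| * ((1/2 : ℝ) * |h|)))
            + M * ((1/2 : ℝ) * |h|))
          ≤ (2 * (L : ℝ) * A * M * H + 2 * M) * (|h| * |h|) := by
        have hpos2 : (0 : ℝ) ≤ (L : ℝ) * (A * (M * |h| * ((1/2 : ℝ) * |h|)))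
            + M * ((1/2 : ℝ) * |h|) := by positivity
        calc (|h| / phi1 m) * ((L : ℝ) * (A * (M * |h| * ((1/2 : ℝ) * |h|)))
              + M * ((1/2 : ℝ) * |h|))
            ≤ (4 * |h|) * ((L : ℝ) * (A * (M * |h| * ((1/2 : ℝ) * |h|)))
              + M * ((1/2 : ℝ) * |h|)) := mul_le_mul_of_nonneg_right hdiv hpos2
          _ = 2 * (L : ℝ) * A * M * (|h| * |h|) * |h| + 2 * M * (|h| * |h|) := by ring
          _ ≤ 2 * (L : ℝ) * A * M * (|h| * |h|) * H + 2 * M * (|h| * |h|) := by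
              have h5 : (0 : ℝ) ≤ 2 * (L : ℝ) * A * M * (|h| * |h|) := by positivity
              exact add_le_add_left (mul_le_mul_of_nonneg_left habs h5) _
          _ = (2 * (L : ℝ) * A * M * H + 2 * M) * (|h| * |h|) := by ring
      have hfin : A * (M * |h| * |h| + (2 * (L : ℝ) * A * M * H + 2 * M) * (|h| * |h|))
          ≤ (3 * A * M + 2 * (L : ℝ) * A * A * M * H + 1) * (|h| * |h|) := by
        have hx2 : (0 : ℝ) ≤ |h| * |h| := by positivity
        calc A * (M * |h| * |h| + (2 * (L : ℝ) * A * M * H + 2 * M) * (|h| * |h|))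
            = (3 * A * M + 2 * (L : ℝ) * A * A * M * H) * (|h| * |h|) := by ring
          _ ≤ (3 * A * M + 2 * (L : ℝ) * A * A * M * H + 1) * (|h| * |h|) :=
              mul_le_mul_of_nonneg_right (by linarith) hx2
      refine le_trans ?_ hfin
      exact mul_le_mul_of_nonneg_left (add_le_add_right hq _) hApos.le
    intro t ht s hs
    exact key t ht s hs
end

section
/- (Third-order accuracy of the second intermediate point of SciRE-Solver-3.) Fix D ∈ ℕ, D ≥ 1, and m ∈ ℕ with m ≥ 3; set φ₁(m) := Σ_{k=1}^{m} (−1)^{k−1}/k!, r₁ := 1/3, r₂ := 2/3. Let I ⊆ ℝ be a compact interval, α, σ : I → ℝ continuously differentiable with α > 0 and σ > 0 on I, f(γ) := α'(γ)/α(γ), g²(γ) := (σ²)'(γ) − 2 f(γ) σ(γ)², NSR(γ) := σ(γ)/α(γ) strictly monotone with continuously differentiable inverse ψ, and let ε_θ : ℝ^D × I → ℝ^D be continuous with ε_θ(·, γ) Lipschitz on ℝ^D with Lipschitz constant L uniform in γ ∈ I. Let x : I → ℝ^D solve the diffusion ODE x'(γ) = f(γ) x(γ) + (g²(γ)/(2σ(γ)))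 ε_θ(x(γ), γ) on I and assume E(τ) := ε_θ(x(ψ(τ)), ψ(τ)) is continuously differentiable on NSR(I). For t, s ∈ I set h := NSR(s) − NSR(t), s₁ := ψ(NSR(t) + r₁ h), s₂ := ψ(NSR(t) + r₂ h), u₁ := (α(s₁)/α(t)) x(t) + α(s₁) r₁ h ε_θ(x(t), t), u₂ := (α(s₂)/α(t)) x(t) + α(s₂) r₂ h ε_θ(x(t), t) + α(s₂) (h/φ₁(m)) (ε_θ(u₁, s₁) − ε_θ(x(t), t)), and v₂ := (α(s₂)/α(t)) x(t) + α(s₂) r₂ h ε_θ(x(t), t) + α(s₂) (h/φ₁(m)) (ε_θ(x(s₁), s₁) − ε_θ(x(t), t)). Then ‖u₂ − v₂‖ ≤ α(s₂) (|h|/φ₁(m)) L ‖u₁ − x(s₁)‖, and there exists C > 0 independent of t, s such that ‖u₂ − v₂‖ ≤ C |h|³. -/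
lemma phi1_succ (m : ℕ) :
    phi1 (m + 1) = phi1 m + (-1 : ℝ) ^ m / Nat.factorial (m + 1) := by
  unfold phi1
  rw [Finset.sum_Icc_succ_top (by omega : 1 ≤ m + 1)]
  simp

lemma phi1_two : phi1 2 = 1 / 2 := by
  show (∑ k ∈ Finset.Icc 1 2, (-1 : ℝ) ^ (k - 1) / Nat.factorial k) = 1 / 2
  rw [show Finset.Icc 1 2 = {1, 2} from rfl]
  norm_num [Nat.factorial]

lemma phi1_half (m : ℕ) (hm : 2 ≤ m) : (1 / 2 : ℝ) ≤ phi1 m := by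
  have fact_le : ∀ n : ℕ, (1 : ℝ) / Nat.factorial (n + 1) ≤ 1 / Nat.factorial n := by
    intro n
    apply one_div_le_one_div_of_le
    · exact_mod_cast Nat.factorial_pos n
    · exact_mod_cast Nat.factorial_le (Nat.le_succ n)
  have even : ∀ k : ℕ, (1 / 2 : ℝ) ≤ phi1 (2 * k + 2) := by
    intro k
    induction k with
    | zero => simpa using phi1_two.ge
    | succ n ih =>
      have e1 : 2 * (n + 1) + 2 = (2 * n + 2 + 1) + 1 := by ring
      rw [e1, phi1_succ, phi1_succ]
      have s1 : ((-1 : ℝ)) ^ (2 * n + 2) = 1 := Even.neg_one_pow ⟨n + 1, by ring⟩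
      have s2 : ((-1 : ℝ)) ^ (2 * n + 2 + 1) = -1 := Odd.neg_one_pow ⟨n + 1, by ring⟩
      rw [s1, s2]
      have := fact_le (2 * n + 2 + 1)
      have h4 : (0:ℝ) < Nat.factorial (2*n+2+1) := by exact_mod_cast Nat.factorial_pos _
      have h5 : (0:ℝ) < Nat.factorial (2*n+2+1+1) := by exact_mod_cast Nat.factorial_pos _
      have e2 : (-1 : ℝ) / Nat.factorial (2*n+2+1+1) = -(1 / Nat.factorial (2*n+2+1+1)) := by
        ring
      linarith [ih]
  obtain ⟨k, rfl | rfl⟩ := Nat.even_or_odd' m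
  · obtain ⟨j, rfl⟩ : ∃ j, k = j + 1 := ⟨k - 1, by omega⟩
    have e : 2 * (j + 1) = 2 * j + 2 := by ring
    rw [e]; exact even j
  · obtain ⟨j, rfl⟩ : ∃ j, k = j + 1 := ⟨k - 1, by omega⟩
    have e : 2 * (j + 1) + 1 = (2 * j + 2) + 1 := by ring
    rw [e, phi1_succ]
    have s1 : ((-1 : ℝ)) ^ (2 * j + 2) = 1 := Even.neg_one_pow ⟨j + 1, by ring⟩
    rw [s1]
    have h6 : (0:ℝ) ≤ 1 / Nat.factorial (2*j+2+1) := by positivity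
    linarith [even j]

lemma sub_key {F : Type*} [AddCommGroup F] [Module ℝ F] (c : ℝ) (p q w r z : F) :
    (p + q + c • (w - z)) - (p + q + c • (r - z)) = c • (w - r) := by
  rw [smul_sub, smul_sub, smul_sub]; abel

lemma mem_uIcc_conv (x y c : ℝ) (hc0 : 0 ≤ c) (hc1 : c ≤ 1) :
    x + c * (y - x) ∈ Set.uIcc x y := by
  rcases le_total x y with hab | hab
  · rw [Set.uIcc_of_le hab]; constructor <;> nlinarith
  · rw [Set.uIcc_of_ge hab]; constructor <;> nlinarith

lemma abs_sub_left_of_mem_uIcc {a b c : ℝ} (h : c ∈ Set.uIcc a b) : |c - a| ≤ |b - a| := by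
  rcases le_total a b with hab | hab
  · rw [Set.uIcc_of_le hab] at h
    rw [abs_of_nonneg (by linarith [h.1]), abs_of_nonneg (by linarith)]
    linarith [h.2]
  · rw [Set.uIcc_of_ge hab] at h
    rw [abs_of_nonpos (by linarith [h.2]), abs_of_nonpos (by linarith)]
    linarith [h.1]

/-- third-order accuracy of the second intermediate point of
SciRE-Solver-3: with `u₁, u₂` the intermediate points of one SciRE-Solver-3
step started from the exact value `x(t)`, and `v₂` the same as `u₂` but with
the exact value `x(s₁)` in place of `u₁`, one has
`‖u₂ − v₂‖ ≤ α(s₂)(|h|/φ₁(m)) L ‖u₁ − x(s₁)‖` and `‖u₂ − v₂‖ ≤ C |h|³`. -/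
theorem stmt14
    (D : ℕ) (hD : 1 ≤ D) (m : ℕ) (hm : 3 ≤ m)
    (a b : ℝ) (hab : a ≤ b) (I : Set ℝ) (hIdef : I = Set.Icc a b)
    (α σ α' σ' : ℝ → ℝ)
    (hα : ∀ γ ∈ I, HasDerivWithinAt α (α' γ) I γ)
    (hσ : ∀ γ ∈ I, HasDerivWithinAt σ (σ' γ) I γ)
    (hα'c : ContinuousOn α' I) (hσ'c : ContinuousOn σ' I)
    (hαpos : ∀ γ ∈ I, 0 < α γ) (hσpos : ∀ γ ∈ I, 0 < σ γ)
    (f g2 NSR : ℝ → ℝ)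
    (hf : ∀ γ, f γ = α' γ / α γ)
    (hg2 : ∀ γ, g2 γ = 2 * σ γ * σ' γ - 2 * f γ * σ γ ^ 2)
    (hNSR : ∀ γ, NSR γ = σ γ / α γ)
    (hmono : StrictMonoOn NSR I ∨ StrictAntiOn NSR I)
    (ψ : ℝ → ℝ) (hψ : ∀ γ ∈ I, ψ (NSR γ) = γ)
    (hψdiff : ContDiffOn ℝ 1 ψ (NSR '' I))
    (ε : EuclideanSpace ℝ (Fin D) → ℝ → EuclideanSpace ℝ (Fin D))
    (hε : ContinuousOn (fun p : EuclideanSpace ℝ (Fin D) × ℝ => ε p.1 p.2)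
      (Set.univ ×ˢ I))
    (L : NNReal) (hL : ∀ γ ∈ I, LipschitzWith L fun v => ε v γ)
    (x : ℝ → EuclideanSpace ℝ (Fin D))
    (hx : ∀ γ ∈ I,
      HasDerivWithinAt x (f γ • x γ + (g2 γ / (2 * σ γ)) • ε (x γ) γ) I γ)
    (hE : ContDiffOn ℝ 1 (fun τ => ε (x (ψ τ)) (ψ τ)) (NSR '' I)) :
    ∃ C > 0, ∀ t ∈ I, ∀ s ∈ I,
      let h := NSR s - NSR t
      let s1 := ψ (NSR t + (1 / 3 : ℝ) * h)
      let s2 := ψ (NSR t + (2 / 3 : ℝ) * h)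
      let u1 := (α s1 / α t) • x t + (α s1 * ((1 / 3 : ℝ) * h)) • ε (x t) t
      let u2 := (α s2 / α t) • x t + (α s2 * ((2 / 3 : ℝ) * h)) • ε (x t) t +
        (α s2 * (h / phi1 m)) • (ε u1 s1 - ε (x t) t)
      let v2 := (α s2 / α t) • x t + (α s2 * ((2 / 3 : ℝ) * h)) • ε (x t) t +
        (α s2 * (h / phi1 m)) • (ε (x s1) s1 - ε (x t) t)
      ‖u2 - v2‖ ≤ α s2 * (|h| / phi1 m) * (L : ℝ) * ‖u1 - x s1‖ ∧
        ‖u2 - v2‖ ≤ C * |h| ^ 3 := by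
  subst hIdef
  have hφ : (1 / 2 : ℝ) ≤ phi1 m := phi1_half m (by omega)
  have hφpos : (0 : ℝ) < phi1 m := lt_of_lt_of_le one_half_pos hφ
  rcases eq_or_lt_of_le hab with heq | hlt
  · -- degenerate interval
    subst heq
    refine ⟨1, one_pos, ?_⟩
    intro t ht s hs
    intro h s1 s2 u1 u2 v2
    have hts : t = s := by
      rw [Set.Icc_self, Set.mem_singleton_iff] at ht hs
      rw [ht, hs]
    have hh : h = 0 := by show NSR s - NSR t = 0; rw [hts]; ring
    have key : u2 - v2 = (α s2 * (h / phi1 m)) • (ε u1 s1 - ε (x s1) s1) :=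
      sub_key _ _ _ _ _ _
    constructor
    · rw [key, hh]; simp
    · rw [key, hh]; simp
  · -- main case
    have hIud : UniqueDiffOn ℝ (Set.Icc a b) := uniqueDiffOn_Icc hlt
    have haI : a ∈ Set.Icc a b := Set.left_mem_Icc.2 hab
    have hbI : b ∈ Set.Icc a b := Set.right_mem_Icc.2 hab
    have hαc : ContinuousOn α (Set.Icc a b) := fun γ hγ => (hα γ hγ).continuousWithinAt
    have hσc : ContinuousOn σ (Set.Icc a b) := fun γ hγ => (hσ γ hγ).continuousWithinAt
    have hα0 : ∀ γ ∈ Set.Icc a b, α γ ≠ 0 := fun γ hγ => (hαpos γ hγ).ne'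
    have hNSRc : ContinuousOn NSR (Set.Icc a b) :=
      (hσc.div hαc hα0).congr (fun γ _ => hNSR γ)
    set J := NSR '' Set.Icc a b with hJdef
    have hJc : IsCompact J := isCompact_Icc.image_of_continuousOn hNSRc
    have hJord : J.OrdConnected := ((isPreconnected_Icc).image NSR hNSRc).ordConnected
    have hJconv : Convex ℝ J := convex_iff_ordConnected.mpr hJord
    have hNSRne : NSR a ≠ NSR b := by
      rcases hmono with hmono | hmono
      · exact (hmono haI hbI hlt).ne
      · exact (hmono haI hbI hlt).ne'
    have hJint : (interior J).Nonempty := by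
      have hsub : Set.uIcc (NSR a) (NSR b) ⊆ J :=
        hJord.uIcc_subset ⟨a, haI, rfl⟩ ⟨b, hbI, rfl⟩
      rcases lt_or_gt_of_ne hNSRne with h' | h'
      · refine ⟨(NSR a + NSR b) / 2, interior_mono hsub ?_⟩
        rw [Set.uIcc_of_le h'.le, interior_Icc]
        exact ⟨by linarith, by linarith⟩
      · refine ⟨(NSR a + NSR b) / 2, interior_mono hsub ?_⟩
        rw [Set.uIcc_of_ge h'.le, interior_Icc]
        exact ⟨by linarith, by linarith⟩
    have hJud : UniqueDiffOn ℝ J := uniqueDiffOn_convex hJconv hJint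
    have hψmem : ∀ τ ∈ J, ψ τ ∈ Set.Icc a b := by
      rintro τ ⟨γ, hγ, rfl⟩; rw [hψ γ hγ]; exact hγ
    set E : ℝ → EuclideanSpace ℝ (Fin D) := fun τ => ε (x (ψ τ)) (ψ τ) with hEdef
    have hEd : ∀ τ ∈ J, HasDerivWithinAt E (derivWithin E J τ) J τ :=
      fun τ hτ => ((hE.differentiableOn one_ne_zero) τ hτ).hasDerivWithinAt
    have hE'c : ContinuousOn (derivWithin E J) J := hE.continuousOn_derivWithin hJud le_rfl
    obtain ⟨K, hK⟩ := hJc.exists_bound_of_continuousOn hE'c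
    have hK0 : (0 : ℝ) ≤ K := le_trans (norm_nonneg _) (hK _ ⟨a, haI, rfl⟩)
    obtain ⟨A, hA⟩ := isCompact_Icc.exists_bound_of_continuousOn hαc
    have hAle : ∀ γ ∈ Set.Icc a b, α γ ≤ A := fun γ hγ =>
      le_trans (le_abs_self _) (by simpa [Real.norm_eq_abs] using hA γ hγ)
    have hA0 : (0 : ℝ) < A := lt_of_lt_of_le (hαpos a haI) (hAle a haI)
    set n' : ℝ → ℝ := fun γ => (σ' γ * α γ - σ γ * α' γ) / α γ ^ 2 with hn'def
    have hNSRd : ∀ γ ∈ Set.Icc a b, HasDerivWithinAt NSR (n' γ) (Set.Icc a b) γ := by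
      intro γ hγ
      exact ((hσ γ hγ).div (hα γ hγ) (hα0 γ hγ)).congr (fun y _ => hNSR y) (hNSR γ)
    have hψd : ∀ τ ∈ J, HasDerivWithinAt ψ (derivWithin ψ J τ) J τ :=
      fun τ hτ => ((hψdiff.differentiableOn one_ne_zero) τ hτ).hasDerivWithinAt
    have hinv : ∀ γ ∈ Set.Icc a b, derivWithin ψ J (NSR γ) * n' γ = 1 := by
      intro γ hγ
      have hτ : NSR γ ∈ J := ⟨γ, hγ, rfl⟩
      have hcomp : HasDerivWithinAt (ψ ∘ NSR) (derivWithin ψ J (NSR γ) * n' γ)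
          (Set.Icc a b) γ :=
        (hψd _ hτ).comp γ (hNSRd γ hγ) (Set.mapsTo_image NSR _)
      have hid : HasDerivWithinAt (ψ ∘ NSR) 1 (Set.Icc a b) γ :=
        (hasDerivWithinAt_id γ _).congr (fun y hy => hψ y hy) (hψ γ hγ)
      exact (hcomp.derivWithin (hIud γ hγ)).symm.trans (hid.derivWithin (hIud γ hγ))
    set W : ℝ → EuclideanSpace ℝ (Fin D) := fun γ => (α γ)⁻¹ • x γ with hWdef
    have hWd : ∀ γ ∈ Set.Icc a b,
        HasDerivWithinAt W (n' γ • ε (x γ) γ) (Set.Icc a b) γ := by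
      intro γ hγ
      have h1 : HasDerivWithinAt (fun y => (α y)⁻¹) (-(α' γ) / α γ ^ 2) (Set.Icc a b) γ :=
        (hα γ hγ).inv (hα0 γ hγ)
      have h2 := h1.smul (hx γ hγ)
      convert h2 using 1
      case e'_4 => rfl
      case e'_5 => rfl
      case e'_6 => rfl
      case e'_8 => rfl
      have hσ0 : σ γ ≠ 0 := (hσpos γ hγ).ne'
      have hαγ : α γ ≠ 0 := hα0 γ hγ
      rw [hn'def]
      simp only
      rw [hg2 γ, hf γ]
      match_scalars <;> (field_simp; try ring; try tauto)
    set Y : ℝ → EuclideanSpace ℝ (Fin D) := fun τ => W (ψ τ) with hYdef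
    have hYd : ∀ τ ∈ J, HasDerivWithinAt Y (E τ) J τ := by
      rintro τ ⟨γ, hγ, rfl⟩
      have hψτ : ψ (NSR γ) = γ := hψ γ hγ
      have hW' : HasDerivWithinAt W (n' γ • ε (x γ) γ) (Set.Icc a b) (ψ (NSR γ)) := by
        rw [hψτ]; exact hWd γ hγ
      have hcomp := hW'.scomp (NSR γ) (hψd _ ⟨γ, hγ, rfl⟩)
        (fun τ' hτ' => hψmem τ' hτ')
      have heq : derivWithin ψ J (NSR γ) • (n' γ • ε (x γ) γ) = E (NSR γ) := by
        rw [smul_smul, hinv γ hγ, one_smul, hEdef]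
        simp only
        rw [hψτ]
      exact heq ▸ hcomp
    refine ⟨2 * A * A * K * (L : ℝ) + 1, ?_, ?_⟩
    · have hQ : (0:ℝ) ≤ 2 * A * A * K * (L:ℝ) :=
        mul_nonneg (mul_nonneg (mul_nonneg (by linarith : (0:ℝ) ≤ 2 * A) hA0.le) hK0)
          L.coe_nonneg
      linarith
    intro t ht s hs
    intro h s1 s2 u1 u2 v2
    have hh : h = NSR s - NSR t := rfl
    have hτ0 : NSR t ∈ J := ⟨t, ht, rfl⟩
    have hτs : NSR s ∈ J := ⟨s, hs, rfl⟩
    have hτ1mem : NSR t + (1/3 : ℝ) * h ∈ Set.uIcc (NSR t) (NSR s) := by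
      rw [hh]; exact mem_uIcc_conv _ _ _ (by norm_num) (by norm_num)
    have hτ2mem : NSR t + (2/3 : ℝ) * h ∈ Set.uIcc (NSR t) (NSR s) := by
      rw [hh]; exact mem_uIcc_conv _ _ _ (by norm_num) (by norm_num)
    have hτ1 : NSR t + (1/3 : ℝ) * h ∈ J := hJord.uIcc_subset hτ0 hτs hτ1mem
    have hτ2 : NSR t + (2/3 : ℝ) * h ∈ J := hJord.uIcc_subset hτ0 hτs hτ2mem
    have hs1I : s1 ∈ Set.Icc a b := hψmem _ hτ1
    have hs2I : s2 ∈ Set.Icc a b := hψmem _ hτ2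
    have key : u2 - v2 = (α s2 * (h / phi1 m)) • (ε u1 s1 - ε (x s1) s1) :=
      sub_key _ _ _ _ _ _
    have hnorm : ‖u2 - v2‖ = α s2 * (|h| / phi1 m) * ‖ε u1 s1 - ε (x s1) s1‖ := by
      rw [key, norm_smul, Real.norm_eq_abs, abs_mul, abs_div,
        abs_of_pos (hαpos s2 hs2I), abs_of_pos hφpos]
    have hlip : ‖ε u1 s1 - ε (x s1) s1‖ ≤ (L : ℝ) * ‖u1 - x s1‖ := by
      have := (hL s1 hs1I).dist_le_mul u1 (x s1)
      rwa [dist_eq_norm, dist_eq_norm] at this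
    have hc0 : (0:ℝ) ≤ α s2 * (|h| / phi1 m) :=
      mul_nonneg (hαpos s2 hs2I).le (div_nonneg (abs_nonneg _) hφpos.le)
    have first : ‖u2 - v2‖ ≤ α s2 * (|h| / phi1 m) * (L : ℝ) * ‖u1 - x s1‖ := by
      calc ‖u2 - v2‖ = α s2 * (|h| / phi1 m) * ‖ε u1 s1 - ε (x s1) s1‖ := hnorm
        _ ≤ α s2 * (|h| / phi1 m) * ((L : ℝ) * ‖u1 - x s1‖) :=
            mul_le_mul_of_nonneg_left hlip hc0
        _ = α s2 * (|h| / phi1 m) * (L : ℝ) * ‖u1 - x s1‖ := (mul_assoc _ _ _).symm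
    refine ⟨first, ?_⟩
    -- Lipschitz-type bound on E over uIcc
    have hsubJ : Set.uIcc (NSR t) (NSR t + (1/3 : ℝ) * h) ⊆ J :=
      hJord.uIcc_subset hτ0 hτ1
    have hEbound : ∀ τ ∈ Set.uIcc (NSR t) (NSR t + (1/3 : ℝ) * h),
        ‖E τ - E (NSR t)‖ ≤ K * |h| := by
      intro τ hτ
      have h1 : ‖E τ - E (NSR t)‖ ≤ K * ‖τ - NSR t‖ :=
        (convex_uIcc _ _).norm_image_sub_le_of_norm_hasDerivWithin_le
          (fun y hy => (hEd y (hsubJ hy)).mono hsubJ)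
          (fun y hy => hK y (hsubJ hy))
          Set.left_mem_uIcc hτ
      have h2 : ‖τ - NSR t‖ ≤ |h| := by
        rw [Real.norm_eq_abs]
        have h3 := abs_sub_left_of_mem_uIcc hτ
        have h4 : |NSR t + (1/3 : ℝ) * h - NSR t| = (1/3 : ℝ) * |h| := by
          rw [show NSR t + (1/3 : ℝ) * h - NSR t = (1/3 : ℝ) * h by ring, abs_mul]
          norm_num
        have h5 := abs_nonneg h
        rw [h4] at h3
        linarith
      calc ‖E τ - E (NSR t)‖ ≤ K * ‖τ - NSR t‖ := h1
        _ ≤ K * |h| := mul_le_mul_of_nonneg_left h2 hK0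
    set G : ℝ → EuclideanSpace ℝ (Fin D) := fun τ => Y τ - τ • E (NSR t) with hGdef
    have hGd : ∀ τ ∈ Set.uIcc (NSR t) (NSR t + (1/3 : ℝ) * h),
        HasDerivWithinAt G (E τ - E (NSR t))
          (Set.uIcc (NSR t) (NSR t + (1/3 : ℝ) * h)) τ := by
      intro τ hτ
      have h1 := (hYd τ (hsubJ hτ)).mono hsubJ
      have h2 : HasDerivWithinAt (fun τ' : ℝ => τ' • E (NSR t)) ((1 : ℝ) • E (NSR t))
          (Set.uIcc (NSR t) (NSR t + (1/3 : ℝ) * h)) τ :=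
        (hasDerivWithinAt_id τ _).smul_const (E (NSR t))
      have h3 := h1.sub h2
      rw [one_smul] at h3
      exact h3
    have hG21 := (convex_uIcc (NSR t) (NSR t + (1/3 : ℝ) * h)).norm_image_sub_le_of_norm_hasDerivWithin_le
      hGd (fun y hy => hEbound y hy) Set.left_mem_uIcc Set.right_mem_uIcc
    have hGbound : ‖G (NSR t + (1/3 : ℝ) * h) - G (NSR t)‖ ≤ K * |h| * ((1/3 : ℝ) * |h|) := by
      refine le_trans hG21 (le_of_eq ?_)
      congr 1
      rw [Real.norm_eq_abs, show NSR t + (1/3 : ℝ) * h - NSR t = (1/3 : ℝ) * h by ring,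
        abs_mul]
      norm_num
    have hψτ0 : ψ (NSR t) = t := hψ t ht
    have hYτ0 : Y (NSR t) = (α t)⁻¹ • x t := by
      show W (ψ (NSR t)) = _
      rw [hψτ0]
    have hYτ1 : Y (NSR t + (1/3 : ℝ) * h) = (α s1)⁻¹ • x s1 := rfl
    have hEτ0 : E (NSR t) = ε (x t) t := by
      show ε (x (ψ (NSR t))) (ψ (NSR t)) = _
      rw [hψτ0]
    have hu1 : u1 - x s1 = (α s1) • -(G (NSR t + (1/3 : ℝ) * h) - G (NSR t)) := by
      show (α s1 / α t) • x t + (α s1 * ((1 / 3 : ℝ) * h)) • ε (x t) t - x s1 = _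
      rw [hGdef]
      simp only
      rw [hYτ0, hYτ1, hEτ0]
      have hαt : α t ≠ 0 := hα0 t ht
      have hαs1 : α s1 ≠ 0 := hα0 s1 hs1I
      match_scalars <;> (field_simp; try ring; try tauto)
    have hu1norm : ‖u1 - x s1‖ ≤ A * (K * |h| * ((1/3 : ℝ) * |h|)) := by
      rw [hu1, norm_smul, Real.norm_eq_abs, abs_of_pos (hαpos s1 hs1I), norm_neg]
      exact mul_le_mul (hAle s1 hs1I) hGbound (norm_nonneg _) hA0.le
    -- combine
    have hdivle : |h| / phi1 m ≤ 2 * |h| := by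
      rw [div_le_iff₀ hφpos]
      have e0 : |h| * (2 * phi1 m - 1) = 2 * |h| * phi1 m - |h| := by ring
      have e1 : (0:ℝ) ≤ |h| * (2 * phi1 m - 1) :=
        mul_nonneg (abs_nonneg h) (by linarith)
      linarith
    have P1 : α s2 * (|h| / phi1 m) ≤ A * (2 * |h|) :=
      mul_le_mul (hAle s2 hs2I) hdivle (div_nonneg (abs_nonneg _) hφpos.le) hA0.le
    have P2 : α s2 * (|h| / phi1 m) * (L : ℝ) ≤ A * (2 * |h|) * (L : ℝ) :=
      mul_le_mul_of_nonneg_right P1 L.coe_nonneg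
    have P2' : (0:ℝ) ≤ A * (2 * |h|) * (L : ℝ) :=
      mul_nonneg (mul_nonneg hA0.le (by positivity)) L.coe_nonneg
    have P3 : α s2 * (|h| / phi1 m) * (L : ℝ) * ‖u1 - x s1‖ ≤
        A * (2 * |h|) * (L : ℝ) * (A * (K * |h| * ((1/3 : ℝ) * |h|))) :=
      mul_le_mul P2 hu1norm (norm_nonneg _) P2'
    have e : A * (2 * |h|) * (L : ℝ) * (A * (K * |h| * ((1/3 : ℝ) * |h|))) =
        (2 / 3) * (A * A * K * (L : ℝ)) * |h| ^ 3 := by ring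
    have hQ : (0:ℝ) ≤ A * A * K * (L : ℝ) :=
      mul_nonneg (mul_nonneg (mul_nonneg hA0.le hA0.le) hK0) L.coe_nonneg
    have h3 : (0:ℝ) ≤ |h| ^ 3 := by positivity
    calc ‖u2 - v2‖ ≤ α s2 * (|h| / phi1 m) * (L : ℝ) * ‖u1 - x s1‖ := first
      _ ≤ A * (2 * |h|) * (L : ℝ) * (A * (K * |h| * ((1/3 : ℝ) * |h|))) := P3
      _ = (2 / 3) * (A * A * K * (L : ℝ)) * |h| ^ 3 := e
      _ ≤ (2 * A * A * K * (L : ℝ) + 1) * |h| ^ 3 := by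
          apply mul_le_mul_of_nonneg_right _ h3
          have e2 : 2 * A * A * K * (L : ℝ) = 2 * (A * A * K * (L : ℝ)) := by ring
          linarith
end
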